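/- arXiv:2012.04031 — 8 statements merged into one kernel-verified Lean document; each statement's English description precedes it below -/
import Mathlib

section
/- Let 1 ≤ k ≤ n and let X be a real symmetric n×n matrix such that every k×k principal submatrix of X is positive semidefinite (i.e., X ∈ S^{n,k}). Let λ₁, …, λₙ be the eigenvalues of X counted with multiplicity. Then for every 1 ≤ ℓ ≤ k, the elementary symmetric polynomial e_ℓ^n(λ₁, …, λₙ) is nonnegative; that is, the vector of eigenvalues of X lies in H(e_k^n). -/
open Matrix Finset

/-- `M ∈ S^{n,k}`: every `k × k` principal submatrix of `M` is positive semidefinite. -/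
def InSnk (n k : ℕ) (M : Matrix (Fin n) (Fin n) ℝ) : Prop :=
  ∀ S : Finset (Fin n), S.card = k →
    (M.submatrix (fun i : {x // x ∈ S} => (i : Fin n))
      (fun i : {x // x ∈ S} => (i : Fin n))).PosSemidef

/-- The elementary symmetric polynomial `e_ℓ^n`. -/
def Esymm {n : ℕ} (ℓ : ℕ) (x : Fin n → ℝ) : ℝ :=
  ∑ S ∈ Finset.powersetCard ℓ (Finset.univ : Finset (Fin n)), ∏ i ∈ S, x i

section Aux

open Polynomial

variable {ι : Type*} [Fintype ι] [DecidableEq ι] {R : Type*} [CommRing R]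

/-- determinant of a row-piecewise matrix where the off-rows come from `c • 1`. -/
lemma det_piecewise_smul_one (S : Finset ι) (A : Matrix ι ι R) (c : R) :
    Matrix.det (Matrix.of (S.piecewise A (c • (1 : Matrix ι ι R)))) =
      c ^ (Sᶜ.card) * Matrix.det (A.submatrix (fun i : {x // x ∈ S} => (i : ι))
        (fun i : {x // x ∈ S} => (i : ι))) := by
  classical
  let e : {x // x ∈ S} ⊕ {x // x ∉ S} ≃ ι := Equiv.sumCompl (· ∈ S)
  rw [← Matrix.det_submatrix_equiv_self e]
  have hM : (Matrix.of (S.piecewise A (c • (1 : Matrix ι ι R)))).submatrix e e =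
      Matrix.fromBlocks
        (A.submatrix (fun i : {x // x ∈ S} => (i : ι)) (fun i : {x // x ∈ S} => (i : ι)))
        (A.submatrix (fun i : {x // x ∈ S} => (i : ι)) (fun i : {x // x ∉ S} => (i : ι)))
        0 (c • (1 : Matrix {x // x ∉ S} {x // x ∉ S} R)) := by
    ext i j
    cases i with
    | inl i =>
      cases j with
      | inl j => simp [e, Finset.piecewise, i.2]
      | inr j => simp [e, Finset.piecewise, i.2]
    | inr i =>
      cases j with
      | inl j =>
        have : (i : ι) ≠ (j : ι) := fun h => i.2 (h ▸ j.2)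
        simp [e, Finset.piecewise, i.2, Matrix.one_apply, this]
      | inr j =>
        have hco : ((i : ι) = (j : ι)) ↔ i = j := Subtype.coe_injective.eq_iff
        simp only [e, Equiv.sumCompl_apply_inr, Matrix.submatrix_apply, Matrix.of_apply,
          Finset.piecewise, i.2, if_false, Matrix.smul_apply, Matrix.one_apply, hco,
          Matrix.fromBlocks_apply₂₂]
  rw [hM, Matrix.det_fromBlocks_zero₂₁, Matrix.det_smul, Matrix.det_one, mul_one]
  rw [mul_comm]
  congr 2
  rw [← Fintype.card_coe (Sᶜ)]
  exact Fintype.card_congr (Equiv.subtypeEquivRight (by simp))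

lemma det_add_sum_piecewise (A B : Matrix ι ι R) :
    (A + B).det = ∑ S : Finset ι, Matrix.det (Matrix.of (S.piecewise A B)) := by
  classical
  exact (Matrix.detRowAlternating : _).toMultilinearMap.map_add_univ A B

lemma psd_det_nonneg {m : Type*} [Fintype m] [DecidableEq m] {M : Matrix m m ℝ}
    (h : M.PosSemidef) : 0 ≤ M.det := by
  exact h.det_nonneg

lemma key_det_eq (n : ℕ) (X : Matrix (Fin n) (Fin n) ℝ) (hX : X.IsHermitian) :
    ((Polynomial.X : ℝ[X]) • (1 : Matrix (Fin n) (Fin n) ℝ[X]) + X.map Polynomial.C).det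
      = ∏ i, ((Polynomial.X : ℝ[X]) + Polynomial.C (hX.eigenvalues i)) := by
  classical
  set U : Matrix (Fin n) (Fin n) ℝ := (hX.eigenvectorUnitary : Matrix (Fin n) (Fin n) ℝ)
  have hU : U * star U = 1 := (Matrix.mem_unitaryGroup_iff).mp hX.eigenvectorUnitary.2
  have hU' : star U * U = 1 := (Matrix.mem_unitaryGroup_iff').mp hX.eigenvectorUnitary.2
  have hspec : X = U * Matrix.diagonal hX.eigenvalues * star U := by
    have := hX.spectral_theorem
    simpa [U] using this
  have hC : ∀ M N : Matrix (Fin n) (Fin n) ℝ, (M * N).map Polynomial.C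
      = M.map Polynomial.C * N.map Polynomial.C := fun M N =>
    Matrix.map_mul (f := (Polynomial.C : ℝ →+* ℝ[X]))
  have hone : (1 : Matrix (Fin n) (Fin n) ℝ).map Polynomial.C = 1 :=
    Matrix.map_one _ (map_zero _) (map_one _)
  have hmain : (Polynomial.X : ℝ[X]) • (1 : Matrix (Fin n) (Fin n) ℝ[X]) + X.map Polynomial.C
      = U.map Polynomial.C *
        ((Polynomial.X : ℝ[X]) • (1 : Matrix (Fin n) (Fin n) ℝ[X])
          + (Matrix.diagonal hX.eigenvalues).map Polynomial.C) * (star U).map Polynomial.C := by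
    rw [mul_add, add_mul]
    congr 1
    · rw [Matrix.mul_smul, Matrix.mul_one, Matrix.smul_mul, ← hC, hU, hone]
    · conv_lhs => rw [hspec]
      rw [hC, hC]
  rw [hmain, Matrix.det_mul, Matrix.det_mul, mul_comm, ← mul_assoc, ← Matrix.det_mul, ← hC,
    hU', hone, Matrix.det_one, one_mul]
  have hdiag : (Polynomial.X : ℝ[X]) • (1 : Matrix (Fin n) (Fin n) ℝ[X])
      + (Matrix.diagonal hX.eigenvalues).map Polynomial.C
      = Matrix.diagonal (fun i => (Polynomial.X : ℝ[X]) + Polynomial.C (hX.eigenvalues i)) := by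
    rw [Matrix.smul_one_eq_diagonal, Matrix.diagonal_map (map_zero _), ← Matrix.diagonal_add]
  rw [hdiag, Matrix.det_diagonal]

end Aux

theorem stmt0 (n k : ℕ) (hk1 : 1 ≤ k) (hkn : k ≤ n)
    (X : Matrix (Fin n) (Fin n) ℝ) (hX : X.IsHermitian)
    (hS : InSnk n k X) :
    ∀ ℓ : ℕ, 1 ≤ ℓ → ℓ ≤ k → 0 ≤ Esymm ℓ hX.eigenvalues := by
  classical
  intro ℓ hℓ1 hℓk
  have hℓn : ℓ ≤ n := hℓk.trans hkn
  set lam := hX.eigenvalues with hlam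
  set d : Finset (Fin n) → ℝ := fun S =>
    Matrix.det (X.submatrix (fun i : {x // x ∈ S} => (i : Fin n))
      (fun i : {x // x ∈ S} => (i : Fin n))) with hd_def
  -- each principal minor with at most k rows is nonnegative
  have hd : ∀ S : Finset (Fin n), S.card ≤ k → 0 ≤ d S := by
    intro S hcard
    obtain ⟨T, hST, hT⟩ := Finset.exists_superset_card_eq hcard
      (by simpa using hkn)
    have hPSD := hS T hT
    have hsub := hPSD.submatrix (fun i : {x // x ∈ S} => (⟨(i : Fin n), hST i.2⟩ : {x // x ∈ T}))
    rw [Matrix.submatrix_submatrix] at hsub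
    exact psd_det_nonneg hsub
  -- coefficient identity: Esymm ℓ lam = sum of ℓ×ℓ principal minors
  have h1 : (∏ i : Fin n, ((Polynomial.X : Polynomial ℝ) + Polynomial.C (lam i))).coeff (n - ℓ)
      = Esymm ℓ lam := by
    rw [Finset.prod_X_add_C_coeff (univ : Finset (Fin n)) lam
      (by simp [Nat.sub_le])]
    have hcard : #(univ : Finset (Fin n)) - (n - ℓ) = ℓ := by
      simp [Nat.sub_sub_self hℓn]
    rw [hcard]
    rfl
  have h2 : ((Polynomial.X : Polynomial ℝ) • (1 : Matrix (Fin n) (Fin n) (Polynomial ℝ))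
        + X.map Polynomial.C).det
      = ∑ S : Finset (Fin n), (Polynomial.X : Polynomial ℝ) ^ (n - S.card) * Polynomial.C (d S) := by
    rw [add_comm, det_add_sum_piecewise]
    refine Finset.sum_congr rfl fun S _ => ?_
    rw [det_piecewise_smul_one S (X.map Polynomial.C) Polynomial.X]
    congr 1
    · rw [Finset.card_compl, Fintype.card_fin]
    · rw [Matrix.submatrix_map, ← RingHom.mapMatrix_apply, ← RingHom.map_det]
  have h3 : Esymm ℓ lam = ∑ S ∈ Finset.powersetCard ℓ (univ : Finset (Fin n)), d S := by
    rw [← h1, ← key_det_eq n X hX, h2, Polynomial.finset_sum_coeff]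
    rw [Finset.powersetCard_eq_filter, ← Finset.powerset_univ, Finset.sum_filter,
      Finset.powerset_univ]
    refine Finset.sum_congr rfl fun S _ => ?_
    rw [mul_comm, Polynomial.C_mul_X_pow_eq_monomial, Polynomial.coeff_monomial]
    have hSn : S.card ≤ n := by
      simpa using Finset.card_le_univ S
    refine if_congr ?_ rfl rfl
    omega
  rw [h3]
  exact Finset.sum_nonneg fun S hSmem => hd S
    (by rw [(Finset.mem_powersetCard.mp hSmem).2]; exact hℓk)
end

section
/- Let 1 ≤ k ≤ n and let A be a real symmetric n×n matrix such that every k×k principal submatrix of A is positive semidefinite. Then A has at most n − k negative eigenvalues, counted with multiplicity. -/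
open Matrix Finset

theorem stmt4 (n k : ℕ) (hk : 1 ≤ k) (hkn : k ≤ n)
    (A : Matrix (Fin n) (Fin n) ℝ) (hA : A.IsHermitian)
    (hS : InSnk n k A) :
    (Finset.univ.filter fun i => hA.eigenvalues i < 0).card ≤ n - k := by
  classical
  by_contra hcon
  push_neg at hcon
  set neg : Finset (Fin n) := Finset.univ.filter fun i => hA.eigenvalues i < 0 with hnegdef
  -- choose a k-element subset S
  obtain ⟨S, -, hScard⟩ : ∃ t ⊆ (Finset.univ : Finset (Fin n)), t.card = k :=
    Finset.exists_subset_card_eq (by simpa using hkn)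
  set E := EuclideanSpace ℝ (Fin n)
  set u : Fin n → E := fun i => hA.eigenvectorBasis i with hu
  -- V: span of eigenvectors with negative eigenvalues
  set V : Submodule ℝ E :=
    Submodule.span ℝ (Set.range fun i : {i // i ∈ neg} => u (i : Fin n)) with hVdef
  -- W: coordinate subspace supported on S
  set W : Submodule ℝ E :=
    Submodule.span ℝ (Set.range fun i : {i // i ∈ S} =>
      (EuclideanSpace.single (i : Fin n) (1 : ℝ) : E)) with hWdef
  have horthu : Orthonormal ℝ u := hA.eigenvectorBasis.orthonormal
  have hVli : LinearIndependent ℝ (fun i : {i // i ∈ neg} => u (i : Fin n)) :=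
    (horthu.comp (fun i : {i // i ∈ neg} => (i : Fin n))
      Subtype.val_injective).linearIndependent
  have hVrank : Module.finrank ℝ V = neg.card := by
    rw [hVdef, finrank_span_eq_card hVli, Fintype.card_coe]
  have hWrank : Module.finrank ℝ W = k := by
    have h1 : Orthonormal ℝ (fun i : {i // i ∈ S} =>
        (EuclideanSpace.single (i : Fin n) (1 : ℝ) : E)) := by
      have h0 := (EuclideanSpace.basisFun (Fin n) ℝ).orthonormal
      rw [show ⇑(EuclideanSpace.basisFun (Fin n) ℝ)
          = fun i => (EuclideanSpace.single i (1 : ℝ) : E) from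
        funext fun i => by simp [EuclideanSpace.basisFun_apply]] at h0
      exact h0.comp (fun i : {i // i ∈ S} => (i : Fin n)) Subtype.val_injective
    rw [hWdef, finrank_span_eq_card h1.linearIndependent, Fintype.card_coe, hScard]
  -- members of W vanish off S
  have hWsupp : ∀ x ∈ W, ∀ j, j ∉ S → x j = 0 := by
    intro x hx
    refine Submodule.span_induction ?_ ?_ ?_ ?_ hx
    · rintro y ⟨i, rfl⟩ j hj
      show (EuclideanSpace.single (i : Fin n) (1 : ℝ) : E) j = 0
      rw [EuclideanSpace.single_apply]
      simp only [ite_eq_right_iff]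
      rintro rfl
      exact absurd i.2 hj
    · intro j _; rfl
    · intro y z _ _ hy hz j hj
      have : (y + z) j = y j + z j := rfl
      rw [this, hy j hj, hz j hj, add_zero]
    · intro a y _ hy j hj
      have : (a • y) j = a * y j := rfl
      rw [this, hy j hj, mul_zero]
  -- dimension count: V ⊓ W ≠ 0
  have hsup : Module.finrank ℝ ↥(V ⊔ W) ≤ n :=
    le_trans (Submodule.finrank_le _) (by simp [E, finrank_euclideanSpace])
  have hsum := Submodule.finrank_sup_add_finrank_inf_eq V W
  have hinf : 0 < Module.finrank ℝ ↥(V ⊓ W) := by omega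
  have : Nontrivial ↥(V ⊓ W) := Module.finrank_pos_iff.mp hinf
  obtain ⟨⟨x, hxVW⟩, hxne⟩ := exists_ne (0 : ↥(V ⊓ W))
  have hx0 : x ≠ 0 := by
    intro h; exact hxne (Subtype.ext h)
  obtain ⟨hxV, hxW⟩ := hxVW
  -- quadratic form is nonnegative from the PSD principal submatrix
  have hvanish : ∀ j, j ∉ S → x j = 0 := hWsupp x hxW
  have hPSD := (hS S hScard).dotProduct_mulVec_nonneg (fun i : {a // a ∈ S} => x (i : Fin n))
  have hform : star (fun i : {a // a ∈ S} => x (i : Fin n)) ⬝ᵥ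
      ((A.submatrix (fun i : {a // a ∈ S} => (i : Fin n))
        (fun i : {a // a ∈ S} => (i : Fin n))) *ᵥ
        (fun i : {a // a ∈ S} => x (i : Fin n)))
      = star (x : Fin n → ℝ) ⬝ᵥ (A *ᵥ (x : Fin n → ℝ)) := by
    simp only [dotProduct, mulVec, Matrix.submatrix_apply, Pi.star_apply, star_trivial]
    have hinner : ∀ i : Fin n, ∑ j : {a // a ∈ S}, A i j * x j = ∑ j, A i j * x j := by
      intro i
      rw [Finset.sum_coe_sort S (fun j => A i j * x j)]
      refine Finset.sum_subset (Finset.subset_univ S) ?_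
      intro j _ hj
      rw [hvanish j hj, mul_zero]
    calc ∑ i : {a // a ∈ S}, x i * ∑ j : {a // a ∈ S}, A i j * x j
        = ∑ i : {a // a ∈ S}, x i * ∑ j, A (i : Fin n) j * x j := by
          refine Finset.sum_congr rfl fun i _ => ?_
          rw [hinner]
      _ = ∑ i ∈ S, x i * ∑ j, A i j * x j :=
          Finset.sum_coe_sort S (fun i => x i * ∑ j, A i j * x j)
      _ = ∑ i, x i * ∑ j, A i j * x j := by
          refine Finset.sum_subset (Finset.subset_univ S) ?_
          intro i _ hi
          rw [hvanish i hi, zero_mul]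
  have hnonneg : (0 : ℝ) ≤ star (x : Fin n → ℝ) ⬝ᵥ (A *ᵥ (x : Fin n → ℝ)) := by
    rw [← hform]; exact hPSD
  -- quadratic form is negative since x ∈ V
  obtain ⟨c, hc⟩ := (Submodule.mem_span_range_iff_exists_fun ℝ).mp hxV
  have hAx : A *ᵥ (x : Fin n → ℝ) =
      ∑ i : {i // i ∈ neg}, (c i * hA.eigenvalues (i : Fin n)) • u (i : Fin n) := by
    have hx' : (x : Fin n → ℝ) = ∑ i : {i // i ∈ neg}, c i • (u (i : Fin n) : Fin n → ℝ) := by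
      rw [← hc, WithLp.ofLp_sum]; rfl
    have hlin : ∀ v : Fin n → ℝ, A *ᵥ v = A.mulVecLin v := fun v => rfl
    rw [hx', hlin, map_sum, WithLp.ofLp_sum]
    refine Finset.sum_congr rfl fun i _ => ?_
    rw [A.mulVecLin.map_smul, Matrix.mulVecLin_apply]
    have h := congrArg (fun v : Fin n → ℝ => c i • v) (hA.mulVec_eigenvectorBasis (i : Fin n))
    refine h.trans ?_
    show c i • (hA.eigenvalues (i : Fin n) • (u (i : Fin n) : Fin n → ℝ)) = _
    rw [smul_smul, mul_comm]; rfl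
  have hq : star (x : Fin n → ℝ) ⬝ᵥ (A *ᵥ (x : Fin n → ℝ)) =
      ∑ i : {i // i ∈ neg}, c i * (c i * hA.eigenvalues (i : Fin n)) := by
    have horth' : Orthonormal ℝ (fun i : {i // i ∈ neg} => u (i : Fin n)) :=
      horthu.comp _ Subtype.val_injective
    have := horth'.inner_sum c (fun i => c i * hA.eigenvalues (i : Fin n)) Finset.univ
    simp only [starRingEnd_apply, star_trivial] at this
    rw [hc] at this
    rw [← this, hAx]
    rw [EuclideanSpace.inner_eq_star_dotProduct]
    exact dotProduct_comm _ _
  have hexc : ∃ i : {i // i ∈ neg}, c i ≠ 0 := by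
    by_contra hall
    push_neg at hall
    apply hx0
    rw [← hc]
    simp [hall]
  obtain ⟨i0, hi0⟩ := hexc
  have hlamneg : ∀ i : {i // i ∈ neg}, hA.eigenvalues (i : Fin n) < 0 := by
    intro i
    exact (Finset.mem_filter.mp i.2).2
  have hterm_le : ∀ i : {i // i ∈ neg},
      c i * (c i * hA.eigenvalues (i : Fin n)) ≤ 0 := by
    intro i
    have : c i * (c i * hA.eigenvalues (i : Fin n)) =
        (c i * c i) * hA.eigenvalues (i : Fin n) := by ring
    rw [this]
    exact mul_nonpos_of_nonneg_of_nonpos (mul_self_nonneg _) (le_of_lt (hlamneg i))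
  have hterm_lt : c i0 * (c i0 * hA.eigenvalues (i0 : Fin n)) < 0 := by
    have : c i0 * (c i0 * hA.eigenvalues (i0 : Fin n)) =
        (c i0 * c i0) * hA.eigenvalues (i0 : Fin n) := by ring
    rw [this]
    exact mul_neg_of_pos_of_neg (mul_self_pos.mpr hi0) (hlamneg i0)
  have hneg' : star (x : Fin n → ℝ) ⬝ᵥ (A *ᵥ (x : Fin n → ℝ)) < 0 := by
    rw [hq]
    calc ∑ i : {i // i ∈ neg}, c i * (c i * hA.eigenvalues (i : Fin n))
        < ∑ _i : {i // i ∈ neg}, (0 : ℝ) :=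
          Finset.sum_lt_sum (fun i _ => hterm_le i) ⟨i0, Finset.mem_univ _, hterm_lt⟩
      _ = 0 := by simp
  linarith
end

section
/- Let n ≥ 1 and let x ∈ ℝ^n satisfy x₁ + x₂ + ⋯ + xₙ ≥ 0. Then there exists a real symmetric n×n matrix M, all of whose diagonal entries are nonnegative, such that x is a vector of eigenvalues of M (the entries of x, counted with multiplicity, are exactly the eigenvalues of M). -/
open Matrix Finset Polynomial


-- charpoly of a diagonal matrix
lemma my_charpoly_diagonal {n : ℕ} (f : Fin n → ℝ) :
    (Matrix.diagonal f).charpoly = ∏ i, (X - C (f i)) := by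
  rw [Matrix.charpoly]
  have : charmatrix (Matrix.diagonal f) = Matrix.diagonal (fun i => X - C (f i)) := by
    ext a b
    by_cases h : a = b
    · subst h; simp [charmatrix_apply_eq]
    · simp [charmatrix_apply_ne _ _ _ h, Matrix.diagonal_apply_ne _ h]
  rw [this, Matrix.det_diagonal]

-- charpoly invariance under orthogonal conjugation
lemma my_charpoly_conj {n : ℕ} (P A : Matrix (Fin n) (Fin n) ℝ) (h : P * Pᵀ = 1) :
    (P * A * Pᵀ).charpoly = A.charpoly := by
  have hmap : ∀ (B C' : Matrix (Fin n) (Fin n) ℝ),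
      (B * C').map (Polynomial.C : ℝ →+* ℝ[X]) = B.map Polynomial.C * C'.map Polynomial.C :=
    fun B C' => Matrix.map_mul
  have h1 : P.map (Polynomial.C : ℝ →+* ℝ[X]) * (Pᵀ).map Polynomial.C = 1 := by
    rw [← hmap, h]; ext a b; simp [Matrix.map_apply, Matrix.one_apply, apply_ite]
  have key : charmatrix (P * A * Pᵀ) =
      P.map (Polynomial.C : ℝ →+* ℝ[X]) * charmatrix A * (Pᵀ).map Polynomial.C := by
    rw [charmatrix, charmatrix, Matrix.mul_sub, Matrix.sub_mul, RingHom.mapMatrix_apply,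
      RingHom.mapMatrix_apply, hmap, hmap]
    congr 1
    · -- P.map C * scalar X * Pᵀ.map C = scalar X
      rw [Matrix.mul_assoc]
      have : (Matrix.scalar (Fin n) (X : ℝ[X])) * (Pᵀ).map Polynomial.C
          = (Pᵀ).map Polynomial.C * Matrix.scalar (Fin n) (X : ℝ[X]) := by
        rw [Matrix.scalar_commute]
        · intro r; exact Commute.all _ _
      rw [this, ← Matrix.mul_assoc, h1, Matrix.one_mul]
  rw [Matrix.charpoly, Matrix.charpoly, key, Matrix.det_mul, Matrix.det_mul]
  have : (P.map (Polynomial.C : ℝ →+* ℝ[X])).det * ((Pᵀ).map Polynomial.C).det = 1 := by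
    rw [← Matrix.det_mul, h1, Matrix.det_one]
  calc (P.map (Polynomial.C : ℝ →+* ℝ[X])).det * (charmatrix A).det * ((Pᵀ).map Polynomial.C).det
      = (P.map (Polynomial.C : ℝ →+* ℝ[X])).det * ((Pᵀ).map Polynomial.C).det * (charmatrix A).det := by ring
    _ = (charmatrix A).det := by rw [this, one_mul]


lemma my_sum_two {n : ℕ} {i j : Fin n} (hij : i ≠ j) (f : Fin n → ℝ)
    (h : ∀ p, p ≠ i → p ≠ j → f p = 0) : ∑ p, f p = f i + f j := by
  rw [← Finset.sum_pair hij]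
  refine (Finset.sum_subset (Finset.subset_univ _) ?_).symm
  intro p _ hp
  simp only [Finset.mem_insert, Finset.mem_singleton, not_or] at hp
  exact h p hp.1 hp.2

def rotMat {n : ℕ} (i j : Fin n) (c s : ℝ) : Matrix (Fin n) (Fin n) ℝ :=
  Matrix.of fun a b =>
    if a = i then (if b = i then c else if b = j then s else 0)
    else if a = j then (if b = i then -s else if b = j then c else 0)
    else if a = b then 1 else 0

@[simp] lemma rotMat_apply {n : ℕ} (i j : Fin n) (c s : ℝ) (a b : Fin n) :
    rotMat i j c s a b =
      (if a = i then (if b = i then c else if b = j then s else 0)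
      else if a = j then (if b = i then -s else if b = j then c else 0)
      else if a = b then 1 else 0) := rfl

/-- Rotation in the (i,j) plane. -/
lemma my_rotate {n : ℕ} (M : Matrix (Fin n) (Fin n) ℝ) (hM : M.IsSymm) {i j : Fin n}
    (hij : i ≠ j) (c s : ℝ) (hcs : c ^ 2 + s ^ 2 = 1) :
    ∃ N : Matrix (Fin n) (Fin n) ℝ, N.IsSymm ∧ N.charpoly = M.charpoly ∧
      N i i = c ^ 2 * M i i + s ^ 2 * M j j + 2 * c * s * M i j ∧
      N i i + N j j = M i i + M j j ∧
      (∀ l, l ≠ i → l ≠ j → N l l = M l l) := by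
  have hji : j ≠ i := Ne.symm hij
  set R : Matrix (Fin n) (Fin n) ℝ := rotMat i j c s with hR
  have hMsym : ∀ a b, M a b = M b a := fun a b => hM.apply b a
  have hmulL : ∀ (P : Matrix (Fin n) (Fin n) ℝ) a b, (R * P) a b =
      if a = i then c * P i b + s * P j b
      else if a = j then -s * P i b + c * P j b else P a b := by
    intro P a b
    rw [Matrix.mul_apply]
    by_cases ha : a = i
    · subst ha
      rw [my_sum_two hij _ (fun p hpi hpj => by simp [hR, rotMat_apply, hpi, hpj, hij])]
      simp [hR, rotMat_apply, hij, hji]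
    · by_cases ha2 : a = j
      · subst ha2
        rw [my_sum_two hij _ (fun p hpi hpj => by simp [hR, rotMat_apply, hpi, hpj, ha])]
        simp [hR, rotMat_apply, ha, hij, hji]
      · rw [Finset.sum_eq_single a (fun p _ hpa => by
            simp [hR, rotMat_apply, ha, ha2, (Ne.symm hpa : a ≠ p)]) (by simp)]
        simp [hR, rotMat_apply, ha, ha2]
  have hmulR : ∀ (P : Matrix (Fin n) (Fin n) ℝ) a b, (P * Rᵀ) a b =
      if b = i then c * P a i + s * P a j
      else if b = j then -s * P a i + c * P a j else P a b := by
    intro P a b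
    rw [Matrix.mul_apply]
    simp only [Matrix.transpose_apply]
    by_cases hb : b = i
    · subst hb
      rw [my_sum_two hij _ (fun p hpi hpj => by simp [hR, rotMat_apply, hpi, hpj, hij])]
      simp [hR, rotMat_apply, hij, hji]
      ring
    · by_cases hb2 : b = j
      · subst hb2
        rw [my_sum_two hij _ (fun p hpi hpj => by simp [hR, rotMat_apply, hpi, hpj, hb])]
        simp [hR, rotMat_apply, hb, hij, hji]
        ring
      · rw [Finset.sum_eq_single b (fun p _ hpb => by
            simp [hR, rotMat_apply, hb, hb2, (Ne.symm hpb : b ≠ p)]) (by simp)]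
        simp [hR, rotMat_apply, hb, hb2]
  have hRR : R * Rᵀ = 1 := by
    ext a b
    rw [hmulR R a b]
    rcases eq_or_ne b i with hb | hb
    · rw [if_pos hb, hb]
      rcases eq_or_ne a i with ha | ha
      · rw [ha, Matrix.one_apply_eq]
        simp [hR, hij, hji]
        linear_combination hcs
      · rcases eq_or_ne a j with ha2 | ha2
        · rw [ha2, Matrix.one_apply_ne hji]
          simp [hR, hij, hji]
          ring
        · rw [Matrix.one_apply_ne ha]
          simp [hR, ha, ha2]
    · rw [if_neg hb]
      rcases eq_or_ne b j with hb2 | hb2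
      · rw [if_pos hb2, hb2]
        rcases eq_or_ne a i with ha | ha
        · rw [ha, Matrix.one_apply_ne hij]
          simp [hR, hij, hji]
          ring
        · rcases eq_or_ne a j with ha2 | ha2
          · rw [ha2, Matrix.one_apply_eq]
            simp [hR, hij, hji]
            linear_combination hcs
          · rw [Matrix.one_apply_ne ha2]
            simp [hR, ha, ha2]
      · rw [if_neg hb2]
        rcases eq_or_ne a i with ha | ha
        · rw [ha, Matrix.one_apply_ne (fun h => hb h.symm)]
          simp [hR, hb, hb2]
        · rcases eq_or_ne a j with ha2 | ha2
          · rw [ha2, Matrix.one_apply_ne (fun h => hb2 h.symm)]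
            simp [hR, hji, hb, hb2]
          · rcases eq_or_ne a b with hab | hab
            · rw [hab, Matrix.one_apply_eq]
              simp [hR, (hab ▸ ha : b ≠ i), (hab ▸ ha2 : b ≠ j)]
            · rw [Matrix.one_apply_ne hab]
              simp [hR, ha, ha2, hab]
  have eMR_ii : (M * Rᵀ) i i = c * M i i + s * M i j := by rw [hmulR, if_pos rfl]
  have eMR_ji : (M * Rᵀ) j i = c * M j i + s * M j j := by rw [hmulR, if_pos rfl]
  have eMR_ij : (M * Rᵀ) i j = -s * M i i + c * M i j := by
    rw [hmulR, if_neg hji, if_pos rfl]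
  have eMR_jj : (M * Rᵀ) j j = -s * M j i + c * M j j := by
    rw [hmulR, if_neg hji, if_pos rfl]
  have eN_ii : (R * M * Rᵀ) i i
      = c * (c * M i i + s * M i j) + s * (c * M j i + s * M j j) := by
    rw [Matrix.mul_assoc, hmulL, if_pos rfl, eMR_ii, eMR_ji]
  have eN_jj : (R * M * Rᵀ) j j
      = -s * (-s * M i i + c * M i j) + c * (-s * M j i + c * M j j) := by
    rw [Matrix.mul_assoc, hmulL, if_neg hji, if_pos rfl, eMR_ij, eMR_jj]
  refine ⟨R * M * Rᵀ, ?_, my_charpoly_conj R M hRR, ?_, ?_, ?_⟩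
  · show (R * M * Rᵀ)ᵀ = R * M * Rᵀ
    calc (R * M * Rᵀ)ᵀ = R * (Mᵀ * Rᵀ) := by
          rw [Matrix.transpose_mul, Matrix.transpose_mul, Matrix.transpose_transpose]
      _ = R * M * Rᵀ := by rw [hM, ← Matrix.mul_assoc]
  · rw [eN_ii, hMsym j i]; ring
  · rw [eN_ii, eN_jj, hMsym j i]
    linear_combination (M i i + M j j) * hcs
  · intro l hli hlj
    rw [Matrix.mul_assoc, hmulL, if_neg hli, if_neg hlj, hmulR, if_neg hli, if_neg hlj]


lemma my_fix_diag {n : ℕ} : ∀ (k : ℕ) (M : Matrix (Fin n) (Fin n) ℝ), M.IsSymm →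
    (0 : ℝ) ≤ ∑ i, M i i → (Finset.univ.filter (fun i => M i i ≠ 0)).card ≤ k →
    ∃ N : Matrix (Fin n) (Fin n) ℝ, N.IsSymm ∧ N.charpoly = M.charpoly ∧ ∀ i, 0 ≤ N i i := by
  intro k
  induction k with
  | zero =>
    intro M hs htr hc
    refine ⟨M, hs, rfl, fun i => ?_⟩
    by_contra h
    have hmem : i ∈ Finset.univ.filter (fun i => M i i ≠ 0) := by
      simp only [Finset.mem_filter, Finset.mem_univ, true_and]
      intro h'
      exact h (le_of_eq h'.symm)
    have := Finset.card_pos.mpr ⟨i, hmem⟩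
    omega
  | succ k ih =>
    intro M hs htr hc
    by_cases hall : ∀ i, 0 ≤ M i i
    · exact ⟨M, hs, rfl, hall⟩
    push_neg at hall
    obtain ⟨i, hi⟩ := hall
    have hj : ∃ j, 0 < M j j := by
      by_contra h
      push_neg at h
      have hle : ∑ l, M l l ≤ 0 := Finset.sum_nonpos (fun l _ => h l)
      have heq : ∑ l, M l l = 0 := le_antisymm hle htr
      have := (Finset.sum_eq_zero_iff_of_nonpos (fun l _ => h l)).mp heq i (Finset.mem_univ i)
      linarith
    obtain ⟨j, hj⟩ := hj
    have hij : i ≠ j := fun h => by rw [h] at hi; linarith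
    set f : ℝ → ℝ := fun θ => Real.cos θ ^ 2 * M i i + Real.sin θ ^ 2 * M j j
      + 2 * Real.cos θ * Real.sin θ * M i j with hf
    have hcont : ContinuousOn f (Set.Icc 0 (Real.pi / 2)) := by
      apply Continuous.continuousOn
      fun_prop
    have hmem : (0 : ℝ) ∈ Set.Icc (f 0) (f (Real.pi / 2)) := by
      constructor
      · simp only [hf, Real.cos_zero, Real.sin_zero]
        norm_num
        linarith
      · simp only [hf, Real.cos_pi_div_two, Real.sin_pi_div_two]
        norm_num
        linarith
    obtain ⟨θ, _, hθ⟩ := intermediate_value_Icc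
      (by positivity : (0:ℝ) ≤ Real.pi / 2) hcont hmem
    obtain ⟨N, hNs, hNc, hNii, hNsum, hNo⟩ :=
      my_rotate M hs hij (Real.cos θ) (Real.sin θ) (Real.cos_sq_add_sin_sq θ)
    have hNii0 : N i i = 0 := by rw [hNii]; exact hθ
    have : Nonempty (Fin n) := ⟨i⟩
    have htrace : ∑ l, N l l = ∑ l, M l l := by
      have h1 : N.trace = M.trace := by
        rw [Matrix.trace_eq_neg_charpoly_coeff, Matrix.trace_eq_neg_charpoly_coeff, hNc]
      simpa [Matrix.trace, Matrix.diag] using h1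
    have hmemM : i ∈ Finset.univ.filter (fun l => M l l ≠ 0) := by
      simp only [Finset.mem_filter, Finset.mem_univ, true_and]
      exact ne_of_lt hi
    have hsub : (Finset.univ.filter (fun l => N l l ≠ 0)) ⊆
        (Finset.univ.filter (fun l => M l l ≠ 0)).erase i := by
      intro l hl
      simp only [Finset.mem_filter, Finset.mem_univ, true_and] at hl
      have hli : l ≠ i := fun h => hl (h ▸ hNii0)
      rw [Finset.mem_erase]
      refine ⟨hli, ?_⟩
      simp only [Finset.mem_filter, Finset.mem_univ, true_and]
      rcases eq_or_ne l j with hlj | hlj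
      · rw [hlj]; exact ne_of_gt hj
      · rw [← hNo l hli hlj]; exact hl
    have hcard : (Finset.univ.filter (fun l => N l l ≠ 0)).card ≤ k := by
      have h1 := Finset.card_le_card hsub
      rw [Finset.card_erase_of_mem hmemM] at h1
      have h2 := Finset.card_pos.mpr ⟨i, hmemM⟩
      omega
    obtain ⟨N', h1, h2, h3⟩ := ih N hNs (htrace ▸ htr) hcard
    exact ⟨N', h1, h2.trans hNc, h3⟩


lemma my_perm_of_multiset_map_eq {n : ℕ} {f g : Fin n → ℝ}
    (h : Multiset.map f Finset.univ.val = Multiset.map g Finset.univ.val) :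
    ∃ σ : Equiv.Perm (Fin n), ∀ i, f i = g (σ i) := by
  have hperm : (List.ofFn f).Perm (List.ofFn g) := by
    rw [← Multiset.coe_eq_coe]
    have e : ∀ (u : Fin n → ℝ), ((List.ofFn u : List ℝ) : Multiset ℝ)
        = Multiset.map u Finset.univ.val := by
      intro u
      rw [List.ofFn_eq_map]
      simp [Fin.univ_def]
    rw [e f, e g, h]
  have h3 : f ∘ Tuple.sort f = g ∘ Tuple.sort g := by
    apply List.ofFn_injective
    refine (fun p h1 h2 => List.Perm.eq_of_sortedLE h1 h2 p) ?_ ?_ ?_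
    · exact ((Equiv.Perm.ofFn_comp_perm (Tuple.sort f) f).trans hperm).trans
        (Equiv.Perm.ofFn_comp_perm (Tuple.sort g) g).symm
    · exact (Tuple.monotone_sort f).sortedLE_ofFn
    · exact (Tuple.monotone_sort g).sortedLE_ofFn
  refine ⟨(Tuple.sort f).symm.trans (Tuple.sort g), fun i => ?_⟩
  have := congrFun h3 ((Tuple.sort f).symm i)
  simpa using this

lemma my_charpoly_diag_roots {n : ℕ} (f : Fin n → ℝ) :
    (∏ i, (X - C (f i))).roots = Multiset.map f Finset.univ.val := by
  have : ∏ i, (X - C (f i)) = ((Multiset.map f Finset.univ.val).map (fun a => X - C a)).prod := by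
    rw [Multiset.map_map, Finset.prod_eq_multiset_prod]
    rfl
  rw [this, Polynomial.roots_multiset_prod_X_sub_C]


theorem stmt5 (n : ℕ) (hn : 1 ≤ n) (x : Fin n → ℝ) (hx : 0 ≤ ∑ i, x i) :
    ∃ (M : Matrix (Fin n) (Fin n) ℝ) (hM : M.IsHermitian),
      (∀ i, 0 ≤ M i i) ∧
      ∃ σ : Equiv.Perm (Fin n), ∀ i, x i = hM.eigenvalues (σ i) := by
  obtain ⟨M, hMs, hchar, hdiag⟩ := my_fix_diag n (Matrix.diagonal x)
    (Matrix.isSymm_diagonal x)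
    (by simpa using hx)
    (by
      calc (Finset.univ.filter (fun i => Matrix.diagonal x i i ≠ 0)).card
          ≤ Finset.univ.card := Finset.card_filter_le _ _
        _ = n := by simp)
  have hHerm : M.IsHermitian := by
    rw [Matrix.IsHermitian, Matrix.conjTranspose]
    simp [Matrix.map]; exact hMs
  have hU : (hHerm.eigenvectorUnitary : Matrix (Fin n) (Fin n) ℝ)
      * (hHerm.eigenvectorUnitary : Matrix (Fin n) (Fin n) ℝ)ᵀ = 1 := by
    have := (Matrix.mem_unitaryGroup_iff).mp (hHerm.eigenvectorUnitary).2
    simpa [Matrix.star_eq_conjTranspose, Matrix.conjTranspose,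
      show ∀ A : Matrix (Fin n) (Fin n) ℝ, A.map (starRingEnd ℝ) = A from fun A => by ext; simp] using this
  have hofReal : (RCLike.ofReal ∘ hHerm.eigenvalues : Fin n → ℝ) = hHerm.eigenvalues := by
    funext i
    simp
  have hchar2 : M.charpoly = (Matrix.diagonal hHerm.eigenvalues).charpoly := by
    conv_lhs => rw [hHerm.spectral_theorem]
    rw [hofReal]
    have := my_charpoly_conj (hHerm.eigenvectorUnitary : Matrix (Fin n) (Fin n) ℝ)
      (Matrix.diagonal hHerm.eigenvalues) hU
    have hstar : star (hHerm.eigenvectorUnitary : Matrix (Fin n) (Fin n) ℝ)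
        = (hHerm.eigenvectorUnitary : Matrix (Fin n) (Fin n) ℝ)ᵀ := by
      ext a b
      simp [Matrix.star_apply]
    rw [Unitary.conjStarAlgAut_apply, hstar, ← this]
  have hmult : Multiset.map x Finset.univ.val
      = Multiset.map hHerm.eigenvalues Finset.univ.val := by
    have h1 : (∏ i, (X - C (x i))) = (∏ i, (X - C (hHerm.eigenvalues i))) := by
      rw [← my_charpoly_diagonal, ← my_charpoly_diagonal, ← hchar, hchar2]
    rw [← my_charpoly_diag_roots, ← my_charpoly_diag_roots, h1]
  obtain ⟨σ, hσ⟩ := my_perm_of_multiset_map_eq hmult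
  exact ⟨M, hHerm, hdiag, σ, hσ⟩
end

section
/- Let n ≥ 2 and let x ∈ ℝ^n satisfy e_ℓ^n(x) ≥ 0 for all 1 ≤ ℓ ≤ n − 1 (i.e., x ∈ H(e_{n−1}^n)). If some entry x_i is strictly negative, then every other entry x_j with j ≠ i is strictly positive. -/
open Finset

/-- Elementary symmetric polynomial over a subset. -/
def EsymmOn {n : ℕ} (s : Finset (Fin n)) (ℓ : ℕ) (x : Fin n → ℝ) : ℝ :=
  ∑ S ∈ Finset.powersetCard ℓ s, ∏ i ∈ S, x i

lemma EsymmOn_zero {n : ℕ} (s : Finset (Fin n)) (x : Fin n → ℝ) :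
    EsymmOn s 0 x = 1 := by
  simp [EsymmOn]

lemma EsymmOn_insert {n : ℕ} {s : Finset (Fin n)} {i : Fin n} (hi : i ∉ s) (ℓ : ℕ)
    (x : Fin n → ℝ) :
    EsymmOn (insert i s) (ℓ + 1) x = EsymmOn s (ℓ + 1) x + x i * EsymmOn s ℓ x := by
  unfold EsymmOn
  rw [Finset.powersetCard_succ_insert hi]
  rw [Finset.sum_union]
  · congr 1
    rw [Finset.sum_image]
    · rw [Finset.mul_sum]
      refine Finset.sum_congr rfl fun T hT => ?_
      have hiT : i ∉ T := fun h => hi ((Finset.mem_powersetCard.mp hT).1 h)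
      rw [Finset.prod_insert hiT]
    · intro T hT U hU hTU
      have hiT : i ∉ T := fun h => hi ((Finset.mem_powersetCard.mp hT).1 h)
      have hiU : i ∉ U := fun h => hi ((Finset.mem_powersetCard.mp hU).1 h)
      rw [← Finset.erase_insert hiT, ← Finset.erase_insert hiU, hTU]
  · rw [Finset.disjoint_left]
    intro T hT hT'
    obtain ⟨U, hU, rfl⟩ := Finset.mem_image.mp hT'
    exact hi ((Finset.mem_powersetCard.mp hT).1 (Finset.mem_insert_self i U))

theorem stmt8 (n : ℕ) (hn : 2 ≤ n) (x : Fin n → ℝ)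
    (hx : ∀ ℓ : ℕ, 1 ≤ ℓ → ℓ ≤ n - 1 → 0 ≤ Esymm ℓ x)
    (i : Fin n) (hi : x i < 0) :
    ∀ j, j ≠ i → 0 < x j := by
  classical
  set y : Finset (Fin n) := Finset.univ.erase i with hy
  have hins : insert i y = Finset.univ := Finset.insert_erase (Finset.mem_univ i)
  have hiy : i ∉ y := Finset.notMem_erase i _
  have hycard : y.card = n - 1 := by
    rw [hy, Finset.card_erase_of_mem (Finset.mem_univ i), Finset.card_univ, Fintype.card_fin]
  have hEfull : ∀ ℓ : ℕ, Esymm (ℓ + 1) x = EsymmOn y (ℓ + 1) x + x i * EsymmOn y ℓ x := by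
    intro ℓ
    have := EsymmOn_insert hiy ℓ x
    rwa [hins] at this
  -- all EsymmOn y ℓ x are positive for 1 ≤ ℓ ≤ n - 1 (i.e. all ℓ ≤ card y)
  have key : ∀ ℓ : ℕ, ℓ ≤ n - 1 → 0 < EsymmOn y ℓ x ∨ ℓ = 0 := by
    intro ℓ hℓ
    induction ℓ with
    | zero => right; rfl
    | succ m ih =>
      left
      have hm : m ≤ n - 1 := Nat.le_of_succ_le hℓ
      have hpos : 0 < EsymmOn y m x := by
        rcases ih hm with h | h
        · exact h
        · rw [h, EsymmOn_zero]; norm_num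
      have h1 : 0 ≤ Esymm (m + 1) x := hx (m + 1) (Nat.succ_le_succ (Nat.zero_le m)) hℓ
      have h2 := hEfull m
      nlinarith [mul_pos (neg_pos.mpr hi) hpos]
  have keypos : ∀ ℓ : ℕ, 0 ≤ ℓ → ℓ ≤ n - 1 → 0 < EsymmOn y ℓ x := by
    intro ℓ _ hℓ
    rcases key ℓ hℓ with h | h
    · exact h
    · rw [h, EsymmOn_zero]; norm_num
  intro j hj
  by_contra hle
  push_neg at hle
  have hjy : j ∈ y := Finset.mem_erase.mpr ⟨hj, Finset.mem_univ j⟩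
  set t : ℝ := -x j with ht
  have ht0 : 0 ≤ t := by simp [ht]; exact hle
  -- ∏_{m ∈ y} (x m + t) = 0 since the j factor vanishes
  have hprod0 : ∏ m ∈ y, (x m + t) = 0 :=
    Finset.prod_eq_zero hjy (by simp [ht])
  -- but it equals a sum of nonnegative terms including a positive one
  have hexp : ∏ m ∈ y, (x m + t) =
      ∑ ℓ ∈ Finset.range (y.card + 1), EsymmOn y ℓ x * t ^ (y.card - ℓ) := by
    rw [Finset.prod_add]
    rw [Finset.sum_powerset]
    refine Finset.sum_congr rfl fun ℓ hℓ => ?_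
    rw [EsymmOn, Finset.sum_mul]
    refine Finset.sum_congr rfl fun T hT => ?_
    obtain ⟨hTs, hTc⟩ := Finset.mem_powersetCard.mp hT
    rw [Finset.prod_const, Finset.card_sdiff_of_subset hTs, hTc]
  have hterm : ∀ ℓ ∈ Finset.range (y.card + 1), 0 ≤ EsymmOn y ℓ x * t ^ (y.card - ℓ) := by
    intro ℓ hℓ
    have hℓ' : ℓ ≤ n - 1 := by
      have := Nat.lt_succ_iff.mp (Finset.mem_range.mp hℓ)
      omega
    exact mul_nonneg (le_of_lt (keypos ℓ (Nat.zero_le ℓ) hℓ')) (pow_nonneg ht0 _)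
  have hlast : 0 < EsymmOn y y.card x * t ^ (y.card - y.card) := by
    rw [Nat.sub_self, pow_zero, mul_one]
    exact keypos y.card (Nat.zero_le _) (le_of_eq hycard)
  have : 0 < ∑ ℓ ∈ Finset.range (y.card + 1), EsymmOn y ℓ x * t ^ (y.card - ℓ) := by
    refine Finset.sum_pos' hterm ⟨y.card, Finset.self_mem_range_succ y.card, hlast⟩
  rw [← hexp, hprod0] at this
  exact lt_irrefl 0 this
end

section
/- Let n ≥ 4 and let M be a real symmetric n×n invertible matrix such that every (n−2)×(n−2) principal submatrix of M is positive semidefinite and singular. Then: (1) det(M) < 0; (2) every (n−1)×(n−1) principal minor of M is strictly negative; (3) every (n−3)×(n−3) principal minor of M is strictly positive. -/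
open Matrix Finset

/-- Every `k × k` principal submatrix of `M` is singular. -/
def LocallySingular (n k : ℕ) (M : Matrix (Fin n) (Fin n) ℝ) : Prop :=
  ∀ S : Finset (Fin n), S.card = k →
    (M.submatrix (fun i : {x // x ∈ S} => (i : Fin n))
      (fun i : {x // x ∈ S} => (i : Fin n))).det = 0

/-- The matrix `G(n,k) = (k/(k-1))·I - (1/(k-1))·J`: ones on the diagonal,
`-1/(k-1)` off the diagonal. -/
noncomputable def Gmat (n k : ℕ) : Matrix (Fin n) (Fin n) ℝ :=
  Matrix.of fun i j => if i = j then 1 else -(1 / ((k : ℝ) - 1))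

namespace Stmt12Aux

variable {n : ℕ}

/-- principal submatrix -/
abbrev psub (M : Matrix (Fin n) (Fin n) ℝ) (S : Finset (Fin n)) :
    Matrix {x // x ∈ S} {x // x ∈ S} ℝ :=
  M.submatrix (fun i : {x // x ∈ S} => (i : Fin n)) (fun i : {x // x ∈ S} => (i : Fin n))

/-- extension by zero -/
def ext0 (S : Finset (Fin n)) (v : {x // x ∈ S} → ℝ) : Fin n → ℝ :=
  fun i => if h : i ∈ S then v ⟨i, h⟩ else 0

lemma ext0_mem {S : Finset (Fin n)} (v : {x // x ∈ S} → ℝ) {i : Fin n} (h : i ∈ S) :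
    ext0 S v i = v ⟨i, h⟩ := dif_pos h

lemma ext0_not_mem {S : Finset (Fin n)} (v : {x // x ∈ S} → ℝ) {i : Fin n} (h : i ∉ S) :
    ext0 S v i = 0 := dif_neg h

lemma ext0_ne_zero {S : Finset (Fin n)} {v : {x // x ∈ S} → ℝ} (hv : v ≠ 0) :
    ext0 S v ≠ 0 := by
  intro h
  apply hv
  funext s
  have := congrFun h s
  rwa [ext0_mem v s.2, Pi.zero_apply] at this

lemma sum_ext0 (S : Finset (Fin n)) (v : {x // x ∈ S} → ℝ) (w : Fin n → ℝ) :
    ∑ j : Fin n, w j * ext0 S v j = ∑ s : {x // x ∈ S}, w s * v s := by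
  classical
  have e1 : ∑ j : Fin n, w j * ext0 S v j = ∑ j ∈ S, w j * ext0 S v j :=
    (Finset.sum_subset (Finset.subset_univ S)
      (fun j _ hj => by rw [ext0_not_mem v hj, mul_zero])).symm
  rw [e1, ← Finset.sum_attach S (fun j => w j * ext0 S v j), Finset.univ_eq_attach]
  exact Finset.sum_congr rfl (fun s _ => by rw [ext0_mem v s.2])

lemma sum_ext0' (S : Finset (Fin n)) (v : {x // x ∈ S} → ℝ) (w : Fin n → ℝ) :
    ∑ j : Fin n, ext0 S v j * w j = ∑ s : {x // x ∈ S}, v s * w s := by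
  simp only [mul_comm]
  rw [sum_ext0 S v w]
  exact Finset.sum_congr rfl (fun s _ => mul_comm _ _)

lemma mulVec_psub {M : Matrix (Fin n) (Fin n) ℝ} {S : Finset (Fin n)}
    (v : {x // x ∈ S} → ℝ) (s : {x // x ∈ S}) :
    (psub M S *ᵥ v) s = (M *ᵥ ext0 S v) (s : Fin n) := by
  simp only [mulVec, dotProduct, psub, submatrix_apply]
  exact (sum_ext0 S v fun j => M s j).symm

lemma quad_psub {M : Matrix (Fin n) (Fin n) ℝ} {S : Finset (Fin n)}
    (v : {x // x ∈ S} → ℝ) :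
    v ⬝ᵥ (psub M S *ᵥ v) = ext0 S v ⬝ᵥ (M *ᵥ ext0 S v) := by
  simp only [dotProduct]
  rw [sum_ext0' S v (fun j => (M *ᵥ ext0 S v) j)]
  exact Finset.sum_congr rfl (fun s _ => by rw [mulVec_psub])

/-- PSD + nonsingular gives PosDef -/
lemma posDef_of_psd_det_ne {m : Type*} [Fintype m] [DecidableEq m]
    {A : Matrix m m ℝ} (hA : A.PosSemidef) (hdet : A.det ≠ 0) : A.PosDef := by
  refine PosDef.of_dotProduct_mulVec_pos hA.1 fun x hx => ?_
  rcases lt_or_eq_of_le (hA.dotProduct_mulVec_nonneg x) with h | h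
  · exact h
  · exfalso
    have hker : A *ᵥ x = 0 := (hA.dotProduct_mulVec_zero_iff x).1 h.symm
    exact hdet (Matrix.exists_mulVec_eq_zero_iff.1 ⟨x, hx, hker⟩)

/-- Cofactor identity: principal (n-1)-minor equals `M⁻¹ i i * det M`. -/
lemma cof (M : Matrix (Fin n) (Fin n) ℝ) (hinv : IsUnit M.det) (i : Fin n) :
    (psub M ({i}ᶜ)).det = M⁻¹ i i * M.det := by
  classical
  set v : Fin n → ℝ := M⁻¹ *ᵥ Pi.single i 1 with hv
  set C : Matrix (Fin n) (Fin n) ℝ := (1 : Matrix (Fin n) (Fin n) ℝ).updateCol i v with hC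
  set B : Matrix (Fin n) (Fin n) ℝ := M.updateCol i (Pi.single i 1) with hB
  -- step 1 : M * C = B
  have h1 : M * C = B := by
    ext r s
    by_cases hs : s = i
    · subst hs
      have hl : (M * C) r s = (M *ᵥ v) r := by
        simp only [Matrix.mul_apply, hC, mulVec, dotProduct]
        exact Finset.sum_congr rfl fun t _ => by rw [updateCol_self]
      have hr : (M *ᵥ v) r = (Pi.single s (1:ℝ) : Fin n → ℝ) r := by
        rw [hv, mulVec_mulVec, Matrix.mul_nonsing_inv M hinv, one_mulVec]
      rw [hl, hr, hB, updateCol_self]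
    · have hl : (M * C) r s = (M * (1 : Matrix (Fin n) (Fin n) ℝ)) r s := by
        simp only [Matrix.mul_apply, hC]
        exact Finset.sum_congr rfl fun t _ => by rw [updateCol_ne hs]
      rw [hl, Matrix.mul_one, hB, updateCol_ne hs]
  -- step 2 : det C = M⁻¹ i i
  have h2 : C.det = M⁻¹ i i := by
    have hCeq : C = 1 + Matrix.replicateCol Unit (fun r => v r - (Pi.single i (1:ℝ) : Fin n → ℝ) r) *
        Matrix.replicateRow Unit (fun s => if s = i then (1 : ℝ) else 0) := by
      ext r s
      by_cases hs : s = i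
      · subst hs
        simp only [hC, updateCol_self, Pi.add_apply, Matrix.add_apply,
          Matrix.mul_apply, Finset.univ_unique, Finset.sum_singleton,
          Matrix.replicateCol_apply, Matrix.replicateRow_apply, if_pos rfl, mul_one]
        rw [Matrix.one_apply, Pi.single_apply]
        by_cases hr : r = s <;> simp [hr]
      · simp [hC, updateCol_ne hs, Matrix.mul_apply, Matrix.replicateCol, Matrix.replicateRow, hs]
    rw [hCeq, Matrix.det_one_add_replicateCol_mul_replicateRow]
    have hvi : v i = M⁻¹ i i := by
      rw [hv, mulVec_single_one]
      simp
    simp [dotProduct, hvi]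
  -- step 3 : det B = det (psub M ({i}ᶜ))
  have h3 : B.det = (psub M ({i}ᶜ)).det := by
    let e := Equiv.sumCompl (fun x : Fin n => x = i)
    haveI : Unique {x : Fin n // x = i} :=
      ⟨⟨⟨i, rfl⟩⟩, by rintro ⟨x, rfl⟩; rfl⟩
    have hdet := Matrix.det_submatrix_equiv_self e B
    have hblock : B.submatrix e e =
        Matrix.fromBlocks
          (Matrix.of fun _ _ : {x : Fin n // x = i} => (1 : ℝ))
          (Matrix.of fun (r : {x : Fin n // x = i}) (s : {x : Fin n // ¬ x = i}) => B (r : Fin n) (s : Fin n))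
          0
          (Matrix.of fun (r s : {x : Fin n // ¬ x = i}) => M (r : Fin n) (s : Fin n)) := by
      ext rr ss
      cases rr with
      | inl r =>
        cases ss with
        | inl s =>
          rcases r with ⟨r, rfl⟩; rcases s with ⟨s, hs⟩
          simp only [submatrix_apply, fromBlocks_apply₁₁, Matrix.of_apply]
          have : s = r := hs
          subst this
          simp [e, hB, Equiv.sumCompl_apply_inl]
        | inr s =>
          simp [e, Equiv.sumCompl_apply_inl, Equiv.sumCompl_apply_inr]
      | inr r =>
        cases ss with
        | inl s =>
          rcases s with ⟨s, rfl⟩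
          simp only [submatrix_apply, fromBlocks_apply₂₁, Matrix.zero_apply,
            e, Equiv.sumCompl_apply_inl, Equiv.sumCompl_apply_inr]
          rw [hB, updateCol_self]
          exact Pi.single_eq_of_ne r.2 1
        | inr s =>
          simp only [submatrix_apply, fromBlocks_apply₂₂, Matrix.of_apply,
            e, Equiv.sumCompl_apply_inr]
          rw [hB, updateCol_ne s.2]
    rw [← hdet, hblock, Matrix.det_fromBlocks_zero₂₁, det_unique]
    simp only [Matrix.of_apply, one_mul]
    -- identify the two submatrices
    let g : {x // x ∈ ({i}ᶜ : Finset (Fin n))} ≃ {x : Fin n // ¬ x = i} :=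
      Equiv.subtypeEquivRight (by intro x; simp)
    have := Matrix.det_submatrix_equiv_self g
      (Matrix.of fun (r s : {x : Fin n // ¬ x = i}) => M (r : Fin n) (s : Fin n))
    rw [← this]
    rfl
  have hdetB : B.det = M.det * M⁻¹ i i := by rw [← h1, Matrix.det_mul, h2]
  rw [← h3, hdetB, mul_comm]

/-- the determinant of the all `-1` off-diagonal, `1` diagonal matrix is negative -/
lemma detG_neg (hn : 4 ≤ n) :
    (Matrix.of fun r s : Fin n => if r = s then (1:ℝ) else -1).det < 0 := by
  have hfact : (Matrix.of fun r s : Fin n => if r = s then (1:ℝ) else -1) =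
      (2:ℝ) • (1 + Matrix.replicateCol Unit (fun _ => -(2⁻¹:ℝ)) * Matrix.replicateRow Unit (fun _ => (1:ℝ))) := by
    ext r s
    simp only [Matrix.of_apply, Matrix.smul_apply, Matrix.add_apply, Matrix.mul_apply,
      Finset.univ_unique, Finset.sum_singleton, Matrix.replicateCol_apply, Matrix.replicateRow_apply,
      Matrix.one_apply, mul_one, smul_eq_mul]
    by_cases h : r = s <;> simp [h] <;> ring
  rw [hfact, Matrix.det_smul, Matrix.det_one_add_replicateCol_mul_replicateRow]
  have hdot : (fun _ : Fin n => (1:ℝ)) ⬝ᵥ (fun _ => -(2⁻¹:ℝ)) = -(n/2) := by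
    simp [dotProduct, Finset.sum_const, Fintype.card_fin]
    ring
  rw [hdot, Fintype.card_fin]
  have h2 : (0:ℝ) < 2 ^ n := by positivity
  have hn' : (4:ℝ) ≤ (n:ℝ) := by exact_mod_cast hn
  nlinarith

end Stmt12Aux

open Stmt12Aux

set_option maxHeartbeats 2000000 in
theorem stmt12 (n : ℕ) (hn : 4 ≤ n)
    (M : Matrix (Fin n) (Fin n) ℝ) (hM : M.IsHermitian)
    (hpsd : InSnk n (n - 2) M) (hsing : LocallySingular n (n - 2) M)
    (hinv : IsUnit M.det) :
    M.det < 0 ∧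
    (∀ S : Finset (Fin n), S.card = n - 1 →
      (M.submatrix (fun i : {x // x ∈ S} => (i : Fin n))
        (fun i : {x // x ∈ S} => (i : Fin n))).det < 0) ∧
    (∀ S : Finset (Fin n), S.card = n - 3 →
      0 < (M.submatrix (fun i : {x // x ∈ S} => (i : Fin n))
        (fun i : {x // x ∈ S} => (i : Fin n))).det) := by
  classical
  set N := M⁻¹ with hNdef
  have hMN : M * N = 1 := Matrix.mul_nonsing_inv M hinv
  have hNM : N * M = 1 := Matrix.nonsing_inv_mul M hinv
  have hMsym : ∀ r s, M r s = M s r := by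
    intro r s
    have := congrFun (congrFun hM.symm r) s
    simpa [Matrix.conjTranspose_apply] using this
  have hNsym : ∀ r s, N r s = N s r := by
    have hMt : Mᵀ = M := by ext r s; exact (hMsym s r)
    have : Nᵀ = N := by rw [hNdef, Matrix.transpose_nonsing_inv, hMt]
    intro r s
    have := congrFun (congrFun this s) r
    simpa [Matrix.transpose_apply] using this
  have hker : ∀ v : Fin n → ℝ, M *ᵥ v = 0 → v = 0 := by
    intro v hv
    have : N *ᵥ (M *ᵥ v) = v := by rw [mulVec_mulVec, hNM, one_mulVec]
    rw [hv, mulVec_zero] at this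
    exact this.symm
  have hrecov : ∀ v : Fin n → ℝ, M *ᵥ (N *ᵥ v) = v := by
    intro v; rw [mulVec_mulVec, hMN, one_mulVec]
  -- Lemma A : PSD on coordinate subspaces avoiding two indices
  have lemA : ∀ p q : Fin n, p ≠ q → ∀ v : Fin n → ℝ, v p = 0 → v q = 0 →
      0 ≤ v ⬝ᵥ (M *ᵥ v) ∧
      (v ⬝ᵥ (M *ᵥ v) = 0 → ∀ r, r ≠ p → r ≠ q → (M *ᵥ v) r = 0) := by
    intro p q hpq v hvp hvq
    set T : Finset (Fin n) := ({p, q} : Finset (Fin n))ᶜ with hT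
    have hTcard : T.card = n - 2 := by
      rw [hT, Finset.card_compl, Finset.card_pair hpq, Fintype.card_fin]
    have hP := hpsd T hTcard
    set u : {x // x ∈ T} → ℝ := fun s => v s with hu
    have hext : ext0 T u = v := by
      funext x
      by_cases hx : x ∈ T
      · rw [ext0_mem u hx]
      · rw [ext0_not_mem u hx]
        have : x ∈ ({p, q} : Finset (Fin n)) := by
          by_contra hc
          exact hx (Finset.mem_compl.2 hc)
        rcases Finset.mem_insert.1 this with h | h
        · rw [h]; exact hvp.symm
        · rw [Finset.mem_singleton.1 h]; exact hvq.symm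
    have hquad : u ⬝ᵥ (psub M T *ᵥ u) = v ⬝ᵥ (M *ᵥ v) := by
      rw [quad_psub, hext]
    constructor
    · have := hP.dotProduct_mulVec_nonneg u
      rw [show star u = u from by simp] at this
      rw [← hquad]
      exact this
    · intro h0 r hrp hrq
      have hq0 : star u ⬝ᵥ (psub M T *ᵥ u) = 0 := by
        rw [show star u = u from by simp, hquad]; exact h0
      have hker0 : psub M T *ᵥ u = 0 := (hP.dotProduct_mulVec_zero_iff u).1 hq0
      have hrT : r ∈ T := by
        rw [hT, Finset.mem_compl]
        intro hc
        rcases Finset.mem_insert.1 hc with h | h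
        · exact hrp h
        · exact hrq (Finset.mem_singleton.1 h)
      have := congrFun hker0 (⟨r, hrT⟩ : {x // x ∈ T})
      rw [mulVec_psub, hext] at this
      exact this
  -- F0 : (n-3)-principal minors are positive
  have F0 : ∀ T : Finset (Fin n), T.card = n - 3 → 0 < (psub M T).det := by
    intro T hT
    have hTc : Tᶜ.card = 3 := by
      rw [Finset.card_compl, hT, Fintype.card_fin]; omega
    obtain ⟨p, q, r, hpq, hpr, hqr, hTc3⟩ := Finset.card_eq_three.1 hTc
    have hmem : ∀ x : Fin n, x ∉ T ↔ (x = p ∨ x = q ∨ x = r) := by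
      intro x
      rw [← Finset.mem_compl, hTc3]
      simp [Finset.mem_insert, Finset.mem_singleton]
    have hpT : p ∉ T := (hmem p).2 (Or.inl rfl)
    have hqT : q ∉ T := (hmem q).2 (Or.inr (Or.inl rfl))
    have hrT : r ∉ T := (hmem r).2 (Or.inr (Or.inr rfl))
    -- PSD of psub M T
    have hT'card : (insert p T).card = n - 2 := by
      rw [Finset.card_insert_of_notMem hpT, hT]; omega
    have hPSD' := hpsd (insert p T) hT'card
    have hPSD : (psub M T).PosSemidef := by
      have := hPSD'.submatrix
        (fun s : {x // x ∈ T} => (⟨(s : Fin n), Finset.mem_insert_of_mem s.2⟩ :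
          {x // x ∈ insert p T}))
      exact this
    have hdetne : (psub M T).det ≠ 0 := by
      intro h0
      obtain ⟨u, hu, hker0⟩ := Matrix.exists_mulVec_eq_zero_iff.2 h0
      set v : Fin n → ℝ := ext0 T u with hv
      have hvne : v ≠ 0 := ext0_ne_zero hu
      have hrows : ∀ t, t ∈ T → (M *ᵥ v) t = 0 := by
        intro t ht
        have := congrFun hker0 (⟨t, ht⟩ : {x // x ∈ T})
        rw [mulVec_psub] at this
        exact this
      have hvp : v p = 0 := ext0_not_mem u hpT
      have hvq : v q = 0 := ext0_not_mem u hqT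
      have hvr : v r = 0 := ext0_not_mem u hrT
      have hquad : v ⬝ᵥ (M *ᵥ v) = 0 := by
        have := quad_psub (M := M) (S := T) u
        rw [← hv] at this
        rw [← this, hker0, dotProduct_zero]
      have hfull : M *ᵥ v = 0 := by
        funext s
        by_cases hsq : s = q
        · subst hsq
          exact (lemA p r hpr v hvp hvr).2 hquad s (Ne.symm hpq) hqr
        by_cases hsr : s = r
        · subst hsr
          exact (lemA p q hpq v hvp hvq).2 hquad s (Ne.symm hpr) (Ne.symm hqr)
        · exact (lemA q r hqr v hvq hvr).2 hquad s hsq hsr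
      exact hvne (hker v hfull)
    exact (posDef_of_psd_det_ne hPSD hdetne).det_pos
  -- F1 : 2x2 principal minors of N vanish
  have F1 : ∀ p q : Fin n, p ≠ q → N p p * N q q = N p q ^ 2 := by
    intro p q hpq
    set T : Finset (Fin n) := ({p, q} : Finset (Fin n))ᶜ with hT
    have hTcard : T.card = n - 2 := by
      rw [hT, Finset.card_compl, Finset.card_pair hpq, Fintype.card_fin]
    have hdet0 := hsing T hTcard
    obtain ⟨u, hu, hker0⟩ := Matrix.exists_mulVec_eq_zero_iff.2 hdet0
    set v : Fin n → ℝ := ext0 T u with hv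
    have hvne : v ≠ 0 := ext0_ne_zero hu
    set y : Fin n → ℝ := M *ᵥ v with hy
    have hyt : ∀ t, t ∈ T → y t = 0 := by
      intro t ht
      have := congrFun hker0 (⟨t, ht⟩ : {x // x ∈ T})
      rw [mulVec_psub] at this
      exact this
    have hyT : ∀ t, t ≠ p → t ≠ q → y t = 0 := by
      intro t htp htq
      apply hyt
      rw [hT, Finset.mem_compl]
      intro hc
      rcases Finset.mem_insert.1 hc with h | h
      · exact htp h
      · exact htq (Finset.mem_singleton.1 h)
    have hNy : N *ᵥ y = v := by rw [hy, mulVec_mulVec, hNM, one_mulVec]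
    have hsum : ∀ r : Fin n, (N *ᵥ y) r = N r p * y p + N r q * y q := by
      intro r
      have h1 : (N *ᵥ y) r = ∑ s : Fin n, N r s * y s := rfl
      rw [h1]
      rw [show (∑ s : Fin n, N r s * y s) = ∑ s ∈ ({p, q} : Finset (Fin n)), N r s * y s from
        (Finset.sum_subset (Finset.subset_univ _) (fun s _ hs => by
          have hsp : s ≠ p := fun h => hs (by rw [h]; exact Finset.mem_insert_self _ _)
          have hsq : s ≠ q := fun h => hs (by rw [h]; exact Finset.mem_insert_of_mem (Finset.mem_singleton_self _))
          rw [hyT s hsp hsq, mul_zero])).symm]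
      exact Finset.sum_pair hpq
    have hvp : v p = 0 := ext0_not_mem u (by rw [hT]; simp)
    have hvq : v q = 0 := ext0_not_mem u (by rw [hT]; simp)
    have eq1 : N p p * y p + N p q * y q = 0 := by
      rw [← hsum p, hNy]; exact hvp
    have eq2 : N q p * y p + N q q * y q = 0 := by
      rw [← hsum q, hNy]; exact hvq
    have hyne : y p ≠ 0 ∨ y q ≠ 0 := by
      by_contra hc
      push_neg at hc
      have hy0 : y = 0 := by
        funext t
        by_cases htp : t = p
        · rw [htp]; exact hc.1
        by_cases htq : t = q
        · rw [htq]; exact hc.2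
        · exact hyT t htp htq
      apply hvne
      rw [← hNy, hy0, mulVec_zero]
    have hs : N q p = N p q := hNsym q p
    rcases hyne with h | h
    · have key : (N p p * N q q - N p q ^ 2) * y p = 0 := by
        linear_combination N q q * eq1 - N p q * eq2 + (N p q * y p) * hs
      rcases mul_eq_zero.1 key with h' | h'
      · linarith [h']
      · exact absurd h' h
    · have key : (N p p * N q q - N p q ^ 2) * y q = 0 := by
        linear_combination N p p * eq2 - N p q * eq1 - (N p p * y p) * hs
      rcases mul_eq_zero.1 key with h' | h'
      · linarith [h']
      · exact absurd h' h
  -- F2 : diagonal of N nonzero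
  have F2 : ∀ p : Fin n, N p p ≠ 0 := by
    intro p hp0
    have hrow : ∀ s : Fin n, N p s = 0 := by
      intro s
      by_cases hs : s = p
      · rw [hs]; exact hp0
      · have := F1 p s (Ne.symm hs)
        rw [hp0, zero_mul] at this
        exact pow_eq_zero_iff (n := 2) (by norm_num) |>.1 this.symm
    have : (N * M) p p = 0 := by
      rw [Matrix.mul_apply]
      exact Finset.sum_eq_zero fun s _ => by rw [hrow s, zero_mul]
    rw [hNM, Matrix.one_apply_eq] at this
    exact one_ne_zero this
  -- F3 : off-diagonal of N nonzero
  have F3 : ∀ p q : Fin n, p ≠ q → N p q ≠ 0 := by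
    intro p q hpq h0
    have := F1 p q hpq
    rw [h0] at this
    simp at this
    rcases this with h | h
    exacts [F2 p h, F2 q h]
  -- F4 : the key sign identity
  have F4 : ∀ p q r : Fin n, p ≠ q → p ≠ r → q ≠ r →
      N p q * N p r = -(N p p * N q r) := by
    intro p q r hpq hpr hqr
    have hne : N p q * N p r ≠ N p p * N q r := by
      intro heq
      set z : Fin n → ℝ := fun t => N p r * N t p - N p p * N t r with hz
      have hMz : ∀ s, (M *ᵥ z) s =
          N p r * (if s = p then (1:ℝ) else 0) - N p p * (if s = r then (1:ℝ) else 0) := by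
        intro s
        have h1 : (M *ᵥ z) s = ∑ t : Fin n, M s t * z t := rfl
        have h2 : ∀ t, M s t * z t =
            N p r * (M s t * N t p) - N p p * (M s t * N t r) := by
          intro t; rw [hz]; ring
        rw [h1]
        simp only [h2]
        rw [Finset.sum_sub_distrib, ← Finset.mul_sum, ← Finset.mul_sum]
        have e1 : ∑ t : Fin n, M s t * N t p = (M * N) s p := (Matrix.mul_apply).symm
        have e2 : ∑ t : Fin n, M s t * N t r = (M * N) s r := (Matrix.mul_apply).symm
        rw [e1, e2, hMN, Matrix.one_apply, Matrix.one_apply]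
      have hzp : z p = 0 := by rw [hz]; ring
      have hzr : z r = 0 := by
        have := F1 p r hpr
        have hs : N r p = N p r := hNsym r p
        simp only [hz]
        linear_combination -this + N p r * hs
      have hzq : z q = 0 := by
        have hs : N q p = N p q := hNsym q p
        simp only [hz]
        linear_combination N p r * hs + heq
      have hzne : z ≠ 0 := by
        intro h0
        have : (M *ᵥ z) r = 0 := by rw [h0, mulVec_zero]; rfl
        rw [hMz r, if_neg (Ne.symm hpr), if_pos rfl] at this
        simp at this
        exact F2 p this
      set T : Finset (Fin n) := ({p, q, r} : Finset (Fin n))ᶜ with hT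
      have hcard3 : ({p, q, r} : Finset (Fin n)).card = 3 :=
        Finset.card_eq_three.2 ⟨p, q, r, hpq, hpr, hqr, rfl⟩
      have hTcard : T.card = n - 3 := by
        rw [hT, Finset.card_compl, hcard3, Fintype.card_fin]
      set u : {x // x ∈ T} → ℝ := fun s => z s with hu
      have hext : ext0 T u = z := by
        funext x
        by_cases hx : x ∈ T
        · rw [ext0_mem u hx]
        · rw [ext0_not_mem u hx]
          have : x ∈ ({p, q, r} : Finset (Fin n)) := by
            by_contra hc
            exact hx (Finset.mem_compl.2 hc)
          rcases Finset.mem_insert.1 this with h | h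
          · rw [h]; exact hzp.symm
          rcases Finset.mem_insert.1 h with h' | h'
          · rw [h']; exact hzq.symm
          · rw [Finset.mem_singleton.1 h']; exact hzr.symm
      have hkerT : psub M T *ᵥ u = 0 := by
        funext s
        rw [mulVec_psub, hext]
        have hsT : (s : Fin n) ∉ ({p, q, r} : Finset (Fin n)) := Finset.mem_compl.1 s.2
        have hsp : (s : Fin n) ≠ p := fun h => hsT (by rw [h]; simp)
        have hsr : (s : Fin n) ≠ r := fun h => hsT (by rw [h]; simp)
        simp only [Pi.zero_apply]
        rw [hMz, if_neg hsp, if_neg hsr]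
        ring
      have hune : u ≠ 0 := by
        intro h0
        apply hzne
        rw [← hext, h0]
        funext x
        unfold ext0
        split <;> rfl
      have hdet0 : (psub M T).det = 0 :=
        Matrix.exists_mulVec_eq_zero_iff.1 ⟨u, hune, hkerT⟩
      have := F0 T hTcard
      rw [hdet0] at this
      exact lt_irrefl 0 this
    have hsq : (N p q * N p r) ^ 2 = (N p p * N q r) ^ 2 := by
      have h1 := F1 p q hpq
      have h2 := F1 p r hpr
      have h3 := F1 q r hqr
      linear_combination (- N p r ^2) * h1 - (N p p * N q q) * h2 + (N p p ^2) * h3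
    have hfac : (N p q * N p r - N p p * N q r) * (N p q * N p r + N p p * N q r) = 0 := by
      linear_combination hsq
    rcases mul_eq_zero.1 hfac with h | h
    · exact absurd (by linarith : N p q * N p r = N p p * N q r) hne
    · linarith
  -- fixed indices
  have h0n : 0 < n := by omega
  set i0 : Fin n := ⟨0, by omega⟩ with hi0
  set i1 : Fin n := ⟨1, by omega⟩ with hi1
  set i2 : Fin n := ⟨2, by omega⟩ with hi2
  set i3 : Fin n := ⟨3, by omega⟩ with hi3
  have h01 : i0 ≠ i1 := by simp [hi0, hi1, Fin.ext_iff]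
  set a : ℝ := N i0 i0 with ha
  set c : Fin n → ℝ := fun t => if t = i0 then -(N i0 i0) else N i0 t with hc
  have hcne : ∀ t, c t ≠ 0 := by
    intro t
    rw [hc]
    by_cases h : t = i0
    · simp [h]; exact F2 i0
    · simp [h]; exact F3 i0 t (fun hh => h hh.symm)
  -- entrywise formula : a * N r s = (2δ - 1) * c r * c s
  have hNform : ∀ r s : Fin n, a * N r s =
      (2 * (if r = s then (1:ℝ) else 0) - 1) * (c r * c s) := by
    intro r s
    by_cases hr : r = i0 <;> by_cases hs : s = i0
    · subst hr; subst hs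
      simp [hc, ha]
      ring
    · subst hr
      rw [if_neg (fun h => hs h.symm)]
      simp only [hc, if_pos rfl, if_neg hs]
      ring
    · subst hs
      rw [if_neg hr]
      simp only [hc, if_pos rfl, if_neg hr]
      have := hNsym r i0
      rw [this]
      ring
    · by_cases hrs : r = s
      · subst hrs
        rw [if_pos rfl]
        simp only [hc, if_neg hr]
        have := F1 i0 r (fun h => hr h.symm)
        rw [← ha] at this
        linear_combination this
      · rw [if_neg hrs]
        simp only [hc, if_neg hr, if_neg hs]
        have := F4 i0 r s (fun h => hr h.symm) (fun h => hs h.symm) hrs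
        rw [← ha] at this
        linear_combination this
  rcases lt_or_gt_of_ne (F2 i0) with haneg | hapos
  · -- case a < 0 : contradiction
    exfalso
    rw [← ha] at haneg
    set R : Matrix (Fin n) (Fin n) ℝ := Matrix.of fun r s =>
      if r = i0 then N i0 s else if r = i1 then N i1 s else if r = i2 then c s else 0 with hR
    have hdR : R.det = 0 := by
      apply Matrix.det_eq_zero_of_row_eq_zero i3
      intro j
      have h30 : i3 ≠ i0 := by simp [hi3, hi0, Fin.ext_iff]
      have h31 : i3 ≠ i1 := by simp [hi3, hi1, Fin.ext_iff]
      have h32 : i3 ≠ i2 := by simp [hi3, hi2, Fin.ext_iff]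
      simp [hR, h30, h31, h32]
    obtain ⟨w, hw, hwker⟩ := Matrix.exists_mulVec_eq_zero_iff.2 hdR
    set x : Fin n → ℝ := N *ᵥ w with hx
    have hrow : ∀ r : Fin n, (R *ᵥ w) r = 0 := fun r => congrFun hwker r
    have hx0 : x i0 = 0 := by
      have := hrow i0
      rw [hx]
      simpa [hR, mulVec, dotProduct] using this
    have hx1 : x i1 = 0 := by
      have := hrow i1
      have h10 : i1 ≠ i0 := by simp [hi1, hi0, Fin.ext_iff]
      rw [hx]
      simpa [hR, mulVec, dotProduct, h10] using this
    set y : Fin n → ℝ := fun t => c t * w t with hy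
    have hysum : ∑ t : Fin n, y t = 0 := by
      have := hrow i2
      have h20 : i2 ≠ i0 := by simp [hi2, hi0, Fin.ext_iff]
      have h21 : i2 ≠ i1 := by simp [hi2, hi1, Fin.ext_iff]
      simpa [hR, hy, mulVec, dotProduct, h20, h21] using this
    have hxw : M *ᵥ x = w := hrecov w
    have haxr : ∀ r : Fin n, a * x r = 2 * (c r * y r) := by
      intro r
      have h1 : a * x r = ∑ s : Fin n, (2 * (if r = s then (1:ℝ) else 0) - 1) * (c r * y s) := by
        have hxr : x r = ∑ s : Fin n, N r s * w s := rfl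
        rw [hxr, Finset.mul_sum]
        refine Finset.sum_congr rfl fun s _ => ?_
        have := hNform r s
        simp only [hy]
        linear_combination w s * this
      rw [h1]
      have h2 : ∀ s : Fin n, (2 * (if r = s then (1:ℝ) else 0) - 1) * (c r * y s)
          = 2 * (if r = s then c r * y s else 0) - c r * y s := by
        intro s; by_cases h : r = s <;> simp [h] <;> ring
      rw [Finset.sum_congr rfl (fun s _ => h2 s), Finset.sum_sub_distrib, ← Finset.mul_sum,
        ← Finset.mul_sum, Finset.sum_ite_eq, if_pos (Finset.mem_univ r), hysum]
      ring
    have hquad : a * (x ⬝ᵥ (M *ᵥ x)) = 2 * ∑ t : Fin n, y t ^ 2 := by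
      rw [hxw]
      have h1 : x ⬝ᵥ w = ∑ r : Fin n, x r * w r := rfl
      rw [h1, Finset.mul_sum, Finset.mul_sum]
      refine Finset.sum_congr rfl fun r _ => ?_
      have h2 : a * (x r * w r) = (a * x r) * w r := by ring
      rw [h2, haxr r]
      simp only [hy]
      ring
    have hqpos : 0 ≤ x ⬝ᵥ (M *ᵥ x) := (lemA i0 i1 h01 x hx0 hx1).1
    have hwexists : ∃ t, w t ≠ 0 := Function.ne_iff.1 hw
    obtain ⟨t0, ht0⟩ := hwexists
    have hsumsq : 0 < ∑ t : Fin n, y t ^ 2 := by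
      apply Finset.sum_pos' (fun t _ => sq_nonneg _)
      refine ⟨t0, Finset.mem_univ t0, ?_⟩
      have : y t0 ≠ 0 := by
        simp only [hy]
        exact mul_ne_zero (hcne t0) ht0
      positivity
    nlinarith
  · -- case a > 0
    rw [← ha] at hapos
    set G : Matrix (Fin n) (Fin n) ℝ := Matrix.of fun r s => if r = s then (1:ℝ) else -1 with hG
    have hfact : a • N = Matrix.diagonal c * G * Matrix.diagonal c := by
      ext r s
      have hrhs : (Matrix.diagonal c * G * Matrix.diagonal c) r s = (c r * G r s) * c s := by
        rw [Matrix.mul_diagonal, Matrix.diagonal_mul]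
      rw [hrhs]
      have hlhs : (a • N) r s = a * N r s := rfl
      rw [hlhs, hNform r s]
      by_cases h : r = s <;> simp [hG, h] <;> ring
    have hdetfact : a ^ n * N.det = (∏ t, c t) * G.det * (∏ t, c t) := by
      have := congrArg Matrix.det hfact
      rw [Matrix.det_smul, Fintype.card_fin, Matrix.det_mul, Matrix.det_mul,
        Matrix.det_diagonal] at this
      exact this
    have hdetG : G.det < 0 := detG_neg hn
    have hprodne : (∏ t, c t) ≠ 0 := Finset.prod_ne_zero_iff.2 fun t _ => hcne t
    have hdetN : N.det < 0 := by
      have hpow : 0 < a ^ n := pow_pos hapos n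
      nlinarith [sq_nonneg (∏ t, c t), sq_abs (∏ t, c t),
        mul_pos (mul_self_pos.2 hprodne) (neg_pos.2 hdetG)]
    have hdetMN : M.det * N.det = 1 := by
      have := congrArg Matrix.det hMN
      rwa [Matrix.det_mul, Matrix.det_one] at this
    have hdetM : M.det < 0 := by nlinarith
    have hdiagpos : ∀ t : Fin n, 0 < N t t := by
      intro t
      by_cases h : t = i0
      · rw [h, ← ha]; exact hapos
      · have h1 := F1 i0 t (fun hh => h hh.symm)
        have h2 := F3 i0 t (fun hh => h hh.symm)
        rw [← ha] at h1
        nlinarith [sq_nonneg (N i0 t), mul_self_pos.2 h2]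
    refine ⟨hdetM, ?_, ?_⟩
    · intro S hS
      have hScc : Sᶜ.card = 1 := by
        rw [Finset.card_compl, hS, Fintype.card_fin]; omega
      obtain ⟨i, hi⟩ := Finset.card_eq_one.1 hScc
      have hSS : S = ({i} : Finset (Fin n))ᶜ := by rw [← hi, compl_compl]
      subst hSS
      have hcof := cof M hinv i
      have hNii : M⁻¹ i i = N i i := by rw [hNdef]
      rw [hNii] at hcof
      calc (psub M ({i}ᶜ)).det = N i i * M.det := hcof
        _ < 0 := mul_neg_of_pos_of_neg (hdiagpos i) hdetM
    · intro S hS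
      exact F0 S hS
end

section
/- Let n ≥ 3 and let M be an invertible real symmetric n×n matrix. Then either some (n−1)×(n−1) principal minor of M is nonzero, or some (n−2)×(n−2) principal minor of M is nonzero. -/
open Matrix Finset

/-- Jacobi's identity: the principal minor of `M` on `Sᶜ` equals
`det M` times the principal minor of `N = M⁻¹` on `S`. -/
lemma jacobi_aux {n : ℕ} (M N : Matrix (Fin n) (Fin n) ℝ)
    (hMN : M * N = 1) (S : Finset (Fin n)) :
    (M.submatrix (fun i : {x // x ∈ Sᶜ} => (i : Fin n))
        (fun i : {x // x ∈ Sᶜ} => (i : Fin n))).det =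
      M.det * (N.submatrix (fun i : {x // x ∈ S} => (i : Fin n))
        (fun i : {x // x ∈ S} => (i : Fin n))).det := by
  classical
  let e : {x // x ∈ S} ⊕ {x // x ∈ Sᶜ} ≃ Fin n :=
    (Equiv.sumCongr (Equiv.refl _)
      (Equiv.subtypeEquivRight (fun x => Finset.mem_compl))).trans
      (Equiv.sumCompl (· ∈ S))
  set A := M.submatrix e e with hA
  set B := N.submatrix e e with hB
  have hAB : A * B = 1 := by
    rw [hA, hB, Matrix.submatrix_mul_equiv, hMN, Matrix.submatrix_one_equiv]
  have hAB' : Matrix.fromBlocks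
      (A.toBlocks₁₁ * B.toBlocks₁₁ + A.toBlocks₁₂ * B.toBlocks₂₁)
      (A.toBlocks₁₁ * B.toBlocks₁₂ + A.toBlocks₁₂ * B.toBlocks₂₂)
      (A.toBlocks₂₁ * B.toBlocks₁₁ + A.toBlocks₂₂ * B.toBlocks₂₁)
      (A.toBlocks₂₁ * B.toBlocks₁₂ + A.toBlocks₂₂ * B.toBlocks₂₂) =
      Matrix.fromBlocks 1 0 0 1 := by
    rw [← Matrix.fromBlocks_multiply, Matrix.fromBlocks_toBlocks,
      Matrix.fromBlocks_toBlocks, hAB, Matrix.fromBlocks_one]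
  have h11 : A.toBlocks₁₁ * B.toBlocks₁₁ + A.toBlocks₁₂ * B.toBlocks₂₁ = 1 := by
    have := congrArg Matrix.toBlocks₁₁ hAB'
    simpa [-Matrix.fromBlocks_one] using this
  have h21 : A.toBlocks₂₁ * B.toBlocks₁₁ + A.toBlocks₂₂ * B.toBlocks₂₁ = 0 := by
    have := congrArg Matrix.toBlocks₂₁ hAB'
    simpa [-Matrix.fromBlocks_one] using this
  have key : A * Matrix.fromBlocks B.toBlocks₁₁ 0 B.toBlocks₂₁ 1 =
      Matrix.fromBlocks 1 A.toBlocks₁₂ 0 A.toBlocks₂₂ := by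
    conv_lhs => rw [← Matrix.fromBlocks_toBlocks A]
    rw [Matrix.fromBlocks_multiply]
    simp [h11, h21]
  have hdet := congrArg Matrix.det key
  rw [Matrix.det_mul, Matrix.det_fromBlocks_zero₁₂, Matrix.det_fromBlocks_zero₂₁,
    Matrix.det_one, Matrix.det_one, mul_one, one_mul] at hdet
  have hAdet : A.det = M.det := Matrix.det_submatrix_equiv_self e M
  have hA22 : A.toBlocks₂₂ = M.submatrix (fun i : {x // x ∈ Sᶜ} => (i : Fin n))
      (fun i : {x // x ∈ Sᶜ} => (i : Fin n)) := rfl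
  have hB11 : B.toBlocks₁₁ = N.submatrix (fun i : {x // x ∈ S} => (i : Fin n))
      (fun i : {x // x ∈ S} => (i : Fin n)) := rfl
  rw [hAdet, hB11, hA22] at hdet
  exact hdet.symm

theorem stmt13 (n : ℕ) (hn : 3 ≤ n)
    (M : Matrix (Fin n) (Fin n) ℝ) (hM : M.IsHermitian)
    (hinv : IsUnit M.det) :
    (∃ S : Finset (Fin n), S.card = n - 1 ∧
      (M.submatrix (fun i : {x // x ∈ S} => (i : Fin n))
        (fun i : {x // x ∈ S} => (i : Fin n))).det ≠ 0) ∨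
    (∃ S : Finset (Fin n), S.card = n - 2 ∧
      (M.submatrix (fun i : {x // x ∈ S} => (i : Fin n))
        (fun i : {x // x ∈ S} => (i : Fin n))).det ≠ 0) := by
  classical
  by_cases hL : ∃ S : Finset (Fin n), S.card = n - 1 ∧
      (M.submatrix (fun i : {x // x ∈ S} => (i : Fin n))
        (fun i : {x // x ∈ S} => (i : Fin n))).det ≠ 0
  · exact Or.inl hL
  · right
    push_neg at hL
    set N := M⁻¹ with hN
    have hMN : M * N = 1 := Matrix.mul_nonsing_inv M hinv
    have hNM : N * M = 1 := Matrix.nonsing_inv_mul M hinv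
    have hdetM : M.det ≠ 0 := hinv.ne_zero
    have hNsymm : ∀ i j, N j i = N i j := by
      intro i j
      have hMT : Mᵀ = M := by
        ext a b
        have := congrFun (congrFun hM a) b
        simpa [Matrix.conjTranspose_apply] using this
      have h1 : Nᵀ = N := by
        rw [hN, Matrix.transpose_nonsing_inv, hMT]
      exact congrFun (congrFun h1 i) j
    -- all diagonal entries of N are zero
    have hdiag : ∀ i, N i i = 0 := by
      intro i
      have hcard : (({i} : Finset (Fin n))ᶜ).card = n - 1 := by
        simp [Finset.card_compl]
      have h0 := hL (({i} : Finset (Fin n))ᶜ) hcard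
      rw [jacobi_aux M N hMN {i}] at h0
      haveI : Subsingleton {x // x ∈ ({i} : Finset (Fin n))} := by
        constructor
        rintro ⟨a, ha⟩ ⟨b, hb⟩
        simp only [Finset.mem_singleton] at ha hb
        subst ha; subst hb; rfl
      have hdet1 := Matrix.det_eq_elem_of_subsingleton
        (N.submatrix (fun k : {x // x ∈ ({i} : Finset (Fin n))} => (k : Fin n))
          (fun k : {x // x ∈ ({i} : Finset (Fin n))} => (k : Fin n)))
        ⟨i, Finset.mem_singleton_self i⟩
      rw [hdet1] at h0
      simp only [Matrix.submatrix_apply] at h0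
      rcases mul_eq_zero.mp h0 with h | h
      · exact absurd h hdetM
      · exact h
    -- find a nonzero entry of N
    have hex : ∃ i j, N i j ≠ 0 := by
      by_contra h
      push_neg at h
      have hzero : N = 0 := by ext i j; exact h i j
      rw [hzero, Matrix.zero_mul] at hNM
      have := congrFun (congrFun hNM ⟨0, by omega⟩) ⟨0, by omega⟩
      simp [Matrix.one_apply] at this
    obtain ⟨i, j, hij⟩ := hex
    have hne : i ≠ j := by
      intro h
      rw [h] at hij
      exact hij (hdiag j)
    refine ⟨(({i, j} : Finset (Fin n)))ᶜ, ?_, ?_⟩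
    · have hc2 : ({i, j} : Finset (Fin n)).card = 2 := by
        rw [Finset.card_insert_of_notMem (by simpa using hne), Finset.card_singleton]
      rw [Finset.card_compl, hc2, Fintype.card_fin]
    · rw [jacobi_aux M N hMN {i, j}]
      have hi : i ∈ ({i, j} : Finset (Fin n)) := by simp
      have hj : j ∈ ({i, j} : Finset (Fin n)) := by simp
      let e2 : Fin 2 ≃ {x // x ∈ ({i, j} : Finset (Fin n))} :=
        { toFun := ![⟨i, hi⟩, ⟨j, hj⟩]
          invFun := fun x => if (x : Fin n) = i then 0 else 1
          left_inv := by
            intro k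
            fin_cases k <;> simp [hne.symm]
          right_inv := by
            rintro ⟨x, hx⟩
            simp only [Finset.mem_insert, Finset.mem_singleton] at hx
            rcases hx with h | h
            · subst h; simp
            · subst h
              simp [Ne.symm hne] }
      have hdet2 : (N.submatrix (fun i : {x // x ∈ ({i, j} : Finset (Fin n))} => (i : Fin n))
          (fun i : {x // x ∈ ({i, j} : Finset (Fin n))} => (i : Fin n))).det =
          N i i * N j j - N i j * N j i := by
        rw [← Matrix.det_submatrix_equiv_self e2]
        rw [Matrix.det_fin_two]
        simp [e2, Matrix.submatrix_apply]
      rw [hdet2]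
      apply mul_ne_zero hdetM
      rw [hdiag i, hdiag j, hNsymm i j]
      simpa using mul_ne_zero hij hij
end

section
/- Let λ ∈ ℝ^4 satisfy e_1^4(λ) ≥ 0 and e_2^4(λ) = 0 (so λ lies on the boundary of H(e_2^4)), and suppose exactly one entry of λ is strictly negative. Then λ is a vector of eigenvalues of some real symmetric 4×4 matrix all of whose 2×2 principal submatrices are positive semidefinite. -/
open Matrix Finset

open Polynomial

set_option maxHeartbeats 1000000

lemma esymm_one (x : Fin 4 → ℝ) : Esymm 1 x = x 0 + x 1 + x 2 + x 3 := by
  rw [Esymm, show Finset.powersetCard 1 (Finset.univ : Finset (Fin 4)) =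
    {{0},{1},{2},{3}} from by decide]
  simp (config := { decide := true }) only [Finset.sum_insert, Finset.prod_insert,
    Finset.sum_singleton, Finset.prod_singleton, Finset.mem_insert, Finset.mem_singleton]
  ring

lemma esymm_two (x : Fin 4 → ℝ) : Esymm 2 x =
    x 0 * x 1 + x 0 * x 2 + x 0 * x 3 + x 1 * x 2 + x 1 * x 3 + x 2 * x 3 := by
  rw [Esymm, show Finset.powersetCard 2 (Finset.univ : Finset (Fin 4)) =
    {{0,1},{0,2},{0,3},{1,2},{1,3},{2,3}} from by decide]
  simp (config := { decide := true }) only [Finset.sum_insert, Finset.prod_insert,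
    Finset.sum_singleton, Finset.prod_singleton, Finset.mem_insert, Finset.mem_singleton]
  ring

lemma det_fin_four' (A : Matrix (Fin 4) (Fin 4) ℝ) :
    A.det =
      A 0 0 * (A 1 1 * A 2 2 * A 3 3 - A 1 1 * A 2 3 * A 3 2 - A 1 2 * A 2 1 * A 3 3
        + A 1 2 * A 2 3 * A 3 1 + A 1 3 * A 2 1 * A 3 2 - A 1 3 * A 2 2 * A 3 1)
      - A 0 1 * (A 1 0 * A 2 2 * A 3 3 - A 1 0 * A 2 3 * A 3 2 - A 1 2 * A 2 0 * A 3 3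
        + A 1 2 * A 2 3 * A 3 0 + A 1 3 * A 2 0 * A 3 2 - A 1 3 * A 2 2 * A 3 0)
      + A 0 2 * (A 1 0 * A 2 1 * A 3 3 - A 1 0 * A 2 3 * A 3 1 - A 1 1 * A 2 0 * A 3 3
        + A 1 1 * A 2 3 * A 3 0 + A 1 3 * A 2 0 * A 3 1 - A 1 3 * A 2 1 * A 3 0)
      - A 0 3 * (A 1 0 * A 2 1 * A 3 2 - A 1 0 * A 2 2 * A 3 1 - A 1 1 * A 2 0 * A 3 2
        + A 1 1 * A 2 2 * A 3 0 + A 1 2 * A 2 0 * A 3 1 - A 1 2 * A 2 1 * A 3 0) := by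
  rw [Matrix.det_succ_row_zero]
  simp [Fin.sum_univ_succ, Matrix.det_fin_three, Matrix.submatrix_apply, Fin.succAbove,
    show (Fin.succ 2 : Fin 4) = 3 from rfl, show ((2 : Fin 3).castSucc : Fin 4) = 2 from rfl,
    show ((1 : Fin 3).castSucc : Fin 4) = 1 from rfl, show ((0 : Fin 3).castSucc : Fin 4) = 0 from rfl]
  norm_num [Fin.lt_def]
  ring
-- Step a: det(x•1 - M) = ∏ (x - eigenvalues)

lemma det_smul_one_sub (M : Matrix (Fin 4) (Fin 4) ℝ) (hM : M.IsHermitian) (x : ℝ) :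
    (x • (1 : Matrix (Fin 4) (Fin 4) ℝ) - M).det = ∏ i, (x - hM.eigenvalues i) := by
  have hU : (hM.eigenvectorUnitary : Matrix (Fin 4) (Fin 4) ℝ) * star (hM.eigenvectorUnitary : Matrix (Fin 4) (Fin 4) ℝ) = 1 :=
    Matrix.mem_unitaryGroup_iff.mp hM.eigenvectorUnitary.2
  set U : Matrix (Fin 4) (Fin 4) ℝ := (hM.eigenvectorUnitary : Matrix (Fin 4) (Fin 4) ℝ) with hUdef
  have hsp := hM.spectral_theorem
  have key : (x • (1 : Matrix (Fin 4) (Fin 4) ℝ) - M) =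
      U * (x • (1 : Matrix (Fin 4) (Fin 4) ℝ) - Matrix.diagonal (RCLike.ofReal ∘ hM.eigenvalues)) * star U := by
    rw [Matrix.mul_sub, Matrix.sub_mul]
    rw [show U * Matrix.diagonal (RCLike.ofReal ∘ hM.eigenvalues) * star U = M from hsp.symm]
    congr 1
    rw [Matrix.mul_smul, Matrix.mul_one, Matrix.smul_mul, hU]
  rw [key, Matrix.det_mul, Matrix.det_mul]
  have : U.det * (Matrix.diagonal (fun i => x - hM.eigenvalues i)).det * (star U).det
      = (Matrix.diagonal (fun i => x - hM.eigenvalues i)).det := by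
    have : U.det * (star U).det = 1 := by rw [← Matrix.det_mul, hU, Matrix.det_one]
    calc U.det * (Matrix.diagonal (fun i => x - hM.eigenvalues i)).det * (star U).det
        = (U.det * (star U).det) * (Matrix.diagonal (fun i => x - hM.eigenvalues i)).det := by ring
      _ = (Matrix.diagonal (fun i => x - hM.eigenvalues i)).det := by rw [this, one_mul]
  rw [show (x • (1 : Matrix (Fin 4) (Fin 4) ℝ) - Matrix.diagonal (RCLike.ofReal ∘ hM.eigenvalues))
      = Matrix.diagonal (fun i => x - hM.eigenvalues i) by
    rw [Matrix.smul_one_eq_diagonal]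
    rw [← Matrix.diagonal_sub]
    rfl]
  rw [this, Matrix.det_diagonal]

-- generic: equal value-multisets (via the det identity) give a permutation

lemma exists_perm_of_det_eq (M : Matrix (Fin 4) (Fin 4) ℝ) (hM : M.IsHermitian) (f : Fin 4 → ℝ)
    (h : ∀ x : ℝ, (x • (1 : Matrix (Fin 4) (Fin 4) ℝ) - M).det = ∏ i, (x - f i)) :
    ∃ σ : Equiv.Perm (Fin 4), ∀ i, f i = hM.eigenvalues (σ i) := by
  set g : Fin 4 → ℝ := hM.eigenvalues with hg
  -- polynomial identity
  have hpoly : (∏ i, (X - C (g i)) : ℝ[X]) = ∏ i, (X - C (f i)) := by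
    apply Polynomial.funext
    intro x
    have h1 : ∀ (u : Fin 4 → ℝ), Polynomial.eval x (∏ i, (X - C (u i))) = ∏ i, (x - u i) := by
      intro u; rw [Polynomial.eval_prod]; simp
    rw [h1, h1, ← h x, det_smul_one_sub M hM x]
  -- multiset equality via roots
  have hms : Multiset.map g Finset.univ.val = Multiset.map f Finset.univ.val := by
    have hr : ∀ (u : Fin 4 → ℝ),
        (∏ i, (X - C (u i)) : ℝ[X]).roots = Multiset.map u Finset.univ.val := by
      intro u
      rw [Finset.prod_eq_multiset_prod]
      rw [show (Multiset.map (fun i => X - C (u i)) Finset.univ.val)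
          = Multiset.map (fun r => X - C r) (Multiset.map u Finset.univ.val) from
        (Multiset.map_map _ _ _).symm]
      exact Polynomial.roots_multiset_prod_X_sub_C _
    rw [← hr g, ← hr f, hpoly]
  -- to lists & sorting
  have hperm : (List.ofFn g).Perm (List.ofFn f) := by
    rw [← Multiset.coe_eq_coe]
    have huniv : (Finset.univ.val : Multiset (Fin 4)) = ↑(List.finRange 4) := rfl
    have h2 : ∀ (u : Fin 4 → ℝ), (↑(List.ofFn u) : Multiset ℝ) = Multiset.map u Finset.univ.val := by
      intro u
      rw [List.ofFn_eq_map, huniv]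
      rfl
    rw [h2, h2, hms]
  have hsorted : g ∘ Tuple.sort g = f ∘ Tuple.sort f := by
    have hp2 : (List.ofFn (g ∘ Tuple.sort g)).Perm (List.ofFn (f ∘ Tuple.sort f)) := by
      refine ((Equiv.Perm.ofFn_comp_perm (Tuple.sort g) g).trans hperm).trans ?_
      exact (Equiv.Perm.ofFn_comp_perm (Tuple.sort f) f).symm
    have := List.Perm.eq_of_sortedLE
      (List.sortedLE_ofFn_iff.mpr (Tuple.monotone_sort g))
      (List.sortedLE_ofFn_iff.mpr (Tuple.monotone_sort f)) hp2
    exact List.ofFn_injective this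
  refine ⟨(Tuple.sort f).symm.trans (Tuple.sort g), fun i => ?_⟩
  have := congrFun hsorted ((Tuple.sort f).symm i)
  simpa using this.symm

lemma core (lam : Fin 4 → ℝ) (hc : lam 0 < 0) (hd0 : 0 ≤ lam 1)
    (hdb : lam 1 ≤ lam 2) (hba : lam 2 ≤ lam 3)
    (h1 : 0 ≤ Esymm 1 lam) (h2 : Esymm 2 lam = 0) :
    ∃ (M : Matrix (Fin 4) (Fin 4) ℝ) (hM : M.IsHermitian),
      InSnk 4 2 M ∧ ∃ σ : Equiv.Perm (Fin 4), ∀ i, lam i = hM.eigenvalues (σ i) := by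
  rw [esymm_one] at h1
  rw [esymm_two] at h2
  set c := lam 0 with hcdef
  set d := lam 1 with hddef
  set b := lam 2 with hbdef
  set a := lam 3 with hadef
  have hd : 0 ≤ d := hd0
  have hb : 0 < b := by
    rcases lt_or_ge 0 b with h | h
    · exact h
    · exfalso
      have hb0 : b = 0 := le_antisymm h (le_trans hd0 hdb)
      have hdd : d = 0 := le_antisymm (hb0 ▸ hdb) hd0
      have hca : c * a = 0 := by rw [hb0, hdd] at h2; linarith [h2]
      rcases mul_eq_zero.mp hca with h' | h'
      · exact absurd h' (ne_of_lt hc)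
      · rw [hb0, hdd, h'] at h1; linarith
  have ha : 0 < a := lt_of_lt_of_le hb hba
  have hS : 0 < a + b + d := by linarith
  have hsigS : (a + d + c) * (a + b + d) = a*a + a*d + d*d := by linear_combination h2
  have hsig : 0 ≤ a + d + c := by
    by_contra hcon
    push_neg at hcon
    nlinarith [hsigS, hS, mul_nonneg (le_of_lt ha) hd, sq_nonneg a, sq_nonneg d]
  have hab' : 0 ≤ a - b := by linarith
  have hbd' : 0 ≤ b - d := by linarith
  have hineq : 0 ≤ b*(a*a+a*d+d*d)^2 - a*d*(a*b+a*d+b*d)*(a+b+d) := by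
    linarith [mul_nonneg (mul_nonneg (pow_nonneg hab' 4) hbd') hd,
      mul_nonneg (mul_nonneg (pow_nonneg hab' 4) hbd') (pow_nonneg hd 0),
      mul_nonneg (pow_nonneg hbd' 5) (pow_nonneg hd 0),
      mul_nonneg (mul_nonneg hab' (pow_nonneg hbd' 4)) (pow_nonneg hd 0),
      mul_nonneg (mul_nonneg (pow_nonneg hab' 2) (pow_nonneg hbd' 3)) (pow_nonneg hd 0),
      mul_nonneg (mul_nonneg (pow_nonneg hab' 3) (pow_nonneg hbd' 2)) (pow_nonneg hd 0),
      mul_nonneg (mul_nonneg hab' (pow_nonneg hbd' 3)) hd,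
      mul_nonneg (mul_nonneg (pow_nonneg hab' 2) (pow_nonneg hbd' 2)) hd,
      mul_nonneg (mul_nonneg (pow_nonneg hab' 3) hbd') hd,
      mul_nonneg (pow_nonneg hbd' 4) hd,
      mul_nonneg (mul_nonneg (pow_nonneg hab' 4) (pow_nonneg hbd' 0)) hd,
      mul_nonneg (mul_nonneg hab' (pow_nonneg hbd' 2)) (pow_nonneg hd 2),
      mul_nonneg (mul_nonneg (pow_nonneg hab' 2) hbd') (pow_nonneg hd 2),
      mul_nonneg (pow_nonneg hbd' 3) (pow_nonneg hd 2),
      mul_nonneg (mul_nonneg (pow_nonneg hab' 3) (pow_nonneg hbd' 0)) (pow_nonneg hd 2),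
      mul_nonneg (mul_nonneg hab' hbd') (pow_nonneg hd 3),
      mul_nonneg (pow_nonneg hbd' 2) (pow_nonneg hd 3),
      mul_nonneg (mul_nonneg (pow_nonneg hab' 2) (pow_nonneg hbd' 0)) (pow_nonneg hd 3)]
  have hkey : 0 ≤ b * (a+d+c)^2 + a*d*c := by
    have hcert : (a+b+d)^2 * (b*(a+d+c)^2 + a*d*c)
        = b*(a*a+a*d+d*d)^2 - a*d*(a*b+a*d+b*d)*(a+b+d)
          + (2*b*d^2 + b*c*d + b^2*d + b^2*c + a*d^2 + 4*a*b*d + a*b*c + a*b^2 + a^2*d + 2*a^2*b) * (c*d + c*b + c*a + d*b + d*a + b*a) := by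
      ring
    have h0 : (a+b+d)^2 * (b*(a+d+c)^2 + a*d*c) ≥ 0 := by
      rw [hcert, h2]
      simpa using hineq
    nlinarith [h0, sq_nonneg (a+b+d), hS, mul_pos hS hS]
  set δ := (a+d+c)^2 + a*d*c/b with hδdef
  have hbδ : b * δ = b*(a+d+c)^2 + a*d*c := by
    rw [hδdef]; field_simp
  have hδ0 : 0 ≤ δ := by nlinarith [hbδ, hkey, hb]
  have hadc : a*d*c ≤ 0 :=
    mul_nonpos_of_nonneg_of_nonpos (mul_nonneg (le_of_lt ha) hd) (le_of_lt hc)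
  have hδσ : δ ≤ (a+d+c)^2 := by nlinarith [hbδ, hb]
  set u := ((a+d+c) + Real.sqrt δ)/2 with hudef
  set t := ((a+d+c) - Real.sqrt δ)/2 with htdef
  have hsru : Real.sqrt δ * Real.sqrt δ = δ := Real.mul_self_sqrt hδ0
  have hsrnn : 0 ≤ Real.sqrt δ := Real.sqrt_nonneg δ
  have hsrle : Real.sqrt δ ≤ a+d+c := by
    have h' := Real.sqrt_le_sqrt hδσ
    rwa [Real.sqrt_sq hsig] at h'
  have hu : 0 ≤ u := by rw [hudef]; linarith
  have ht : 0 ≤ t := by rw [htdef]; linarith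
  have hst : u + t = a + d + c := by rw [hudef, htdef]; ring
  have hut : 4*b*(u*t) = -(a*d*c) := by
    rw [hudef, htdef]
    linear_combination (-b) * hsru - hbδ
  set p := Real.sqrt (b/2) with hpdef
  set q := Real.sqrt u with hqdef
  set r := Real.sqrt t with hrdef
  have hp : p * p = b/2 := Real.mul_self_sqrt (by linarith)
  have hq : q * q = u := Real.mul_self_sqrt hu
  have hr : r * r = t := Real.mul_self_sqrt ht
  set z : Fin 4 → ℝ := ![p, p, q, r] with hzdef
  set M : Matrix (Fin 4) (Fin 4) ℝ :=
    Matrix.of (fun i j => if i = j then z i * z i else -(z i * z j)) with hMdef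
  have hM : M.IsHermitian := by
    ext i j
    simp only [Matrix.conjTranspose_apply, Matrix.of_apply, star_trivial, hMdef]
    by_cases hij : i = j
    · subst hij; simp
    · rw [if_neg hij, if_neg (fun h => hij h.symm)]; ring
  have hInSnk : InSnk 4 2 M := by
    intro S hS2
    obtain ⟨i, j, hij, rfl⟩ := Finset.card_eq_two.mp hS2
    set y : {x // x ∈ ({i, j} : Finset (Fin 4))} → ℝ :=
      fun k => if (k : Fin 4) = i then z i else -(z (k : Fin 4)) with hydef
    have hentry : ∀ k l : {x // x ∈ ({i, j} : Finset (Fin 4))},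
        M (k : Fin 4) (l : Fin 4) = y k * y l := by
      intro k l
      have hk := k.2
      have hl := l.2
      rw [Finset.mem_insert, Finset.mem_singleton] at hk hl
      have hji : j ≠ i := Ne.symm hij
      rcases hk with hk | hk <;> rcases hl with hl | hl <;>
        simp only [hydef, hMdef, Matrix.of_apply, hk, hl, if_pos rfl, if_neg hij, if_neg hji,
          eq_self_iff_true, if_true] <;>
        ring
    rw [Matrix.posSemidef_iff_dotProduct_mulVec]
    constructor
    · ext k l
      simp only [Matrix.conjTranspose_apply, Matrix.submatrix_apply, star_trivial,
        hentry k l, hentry l k]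
      ring
    · intro x
      have hform : dotProduct (star x)
          ((M.submatrix (fun i : {x // x ∈ ({i, j} : Finset (Fin 4))} => (i : Fin 4))
            (fun i : {x // x ∈ ({i, j} : Finset (Fin 4))} => (i : Fin 4))) *ᵥ x)
          = (∑ k, y k * x k) * (∑ k, y k * x k) := by
        rw [Finset.sum_mul_sum]
        simp only [dotProduct, Matrix.mulVec, Matrix.submatrix_apply, star_trivial,
          dotProduct]
        rw [Finset.sum_congr rfl]
        intro k _
        rw [Finset.mul_sum, Finset.sum_congr rfl]
        intro l _
        rw [hentry k l]
        ring
      rw [hform]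
      exact mul_self_nonneg _
  have hdet : ∀ x : ℝ, (x • (1 : Matrix (Fin 4) (Fin 4) ℝ) - M).det = ∏ i, (x - lam i) := by
    intro x
    have hxM : x • (1 : Matrix (Fin 4) (Fin 4) ℝ) - M =
        !![x - p*p, p*p, p*q, p*r;
           p*p, x - p*p, p*q, p*r;
           p*q, p*q, x - q*q, q*r;
           p*r, p*r, q*r, x - r*r] := by
      ext i j
      fin_cases i <;> fin_cases j <;>
        (try simp [hMdef, hzdef, Matrix.one_apply, Matrix.sub_apply, Matrix.smul_apply]) <;>
        (try ring)
    rw [hxM, det_fin_four']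
    rw [Fin.prod_univ_four]
    rw [show lam 0 = c from hcdef.symm, show lam 1 = d from hddef.symm,
      show lam 2 = b from hbdef.symm, show lam 3 = a from hadef.symm]
    simp
    linear_combination ((-16)*p^2*q^2*r^2 + (-8)*b*q^2*r^2 + 8*x*q^2*r^2 + 4*x*p^2*r^2 + 4*x*p^2*q^2 + 2*x*b*r^2 + 2*x*b*q^2 + (-2)*x^3) * hp
      + ((-4)*b^2*r^2 + 4*x*b*r^2 + x*b^2 + (-1)*x^3) * hq
      + ((-4)*b^2*u + 4*x*b*u + x*b^2 + (-1)*x^3) * hr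
      + (x*b^2 + (-1)*x^3) * hst
      + ((-1)*b + x) * hut
      + (x*b + (-1)*x^2) * h2
  exact ⟨M, hM, hInSnk, exists_perm_of_det_eq M hM lam hdet⟩


theorem stmt15 (lam : Fin 4 → ℝ)
    (h1 : 0 ≤ Esymm 1 lam) (h2 : Esymm 2 lam = 0)
    (hneg : (Finset.univ.filter fun i => lam i < 0).card = 1) :
    ∃ (M : Matrix (Fin 4) (Fin 4) ℝ) (hM : M.IsHermitian),
      InSnk 4 2 M ∧
      ∃ σ : Equiv.Perm (Fin 4), ∀ i, lam i = hM.eigenvalues (σ i) := by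
  set τ := Tuple.sort lam with hτ
  set μ := lam ∘ τ with hμ
  have hmono : Monotone μ := Tuple.monotone_sort lam
  have hsum : ∑ i, μ i = ∑ i, lam i := Equiv.sum_comp τ lam
  have hsumsq : ∑ i, (μ i)^2 = ∑ i, (lam i)^2 := Equiv.sum_comp τ (fun j => (lam j)^2)
  have he1 : Esymm 1 μ = Esymm 1 lam := by
    rw [esymm_one, esymm_one, show μ 0 + μ 1 + μ 2 + μ 3 = ∑ i, μ i from (Fin.sum_univ_four μ).symm,
      show lam 0 + lam 1 + lam 2 + lam 3 = ∑ i, lam i from (Fin.sum_univ_four lam).symm, hsum]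
  have hsq : ∀ x : Fin 4 → ℝ, Esymm 2 x = ((∑ i, x i)^2 - ∑ i, (x i)^2)/2 := by
    intro x
    rw [esymm_two, Fin.sum_univ_four x, Fin.sum_univ_four (fun i => (x i)^2)]
    ring
  have he2 : Esymm 2 μ = Esymm 2 lam := by rw [hsq, hsq, hsum, hsumsq]
  have hcard : (Finset.univ.filter fun i => μ i < 0).card
      = (Finset.univ.filter fun i => lam i < 0).card := by
    apply Finset.card_bij (fun i _ => τ i)
    · intro i hi
      simp only [Finset.mem_filter, Finset.mem_univ, true_and] at hi ⊢
      exact hi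
    · intro i hi j hj hij
      exact τ.injective hij
    · intro j hj
      refine ⟨τ.symm j, ?_, by simp⟩
      simp only [Finset.mem_filter, Finset.mem_univ, true_and] at hj ⊢
      simpa [hμ] using hj
  rw [hneg] at hcard
  obtain ⟨i0, hi0⟩ := Finset.card_eq_one.mp hcard
  have hi0neg : μ i0 < 0 := by
    have : i0 ∈ Finset.univ.filter fun i => μ i < 0 := by rw [hi0]; exact Finset.mem_singleton_self i0
    simpa using this
  have hμ0 : μ 0 < 0 := lt_of_le_of_lt (hmono (Fin.zero_le i0)) hi0neg
  have hμ1 : 0 ≤ μ 1 := by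
    by_contra hcon
    push_neg at hcon
    have h0 : (0 : Fin 4) ∈ Finset.univ.filter fun i => μ i < 0 := by simpa using hμ0
    have h1' : (1 : Fin 4) ∈ Finset.univ.filter fun i => μ i < 0 := by simpa using hcon
    rw [hi0, Finset.mem_singleton] at h0 h1'
    rw [← h1'] at h0
    exact absurd h0 (by decide)
  have hμ12 : μ 1 ≤ μ 2 := hmono (by decide)
  have hμ23 : μ 2 ≤ μ 3 := hmono (by decide)
  obtain ⟨M, hM, hsnk, σ, hσ⟩ := core μ hμ0 hμ1 hμ12 hμ23 (he1 ▸ h1) (he2 ▸ h2)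
  refine ⟨M, hM, hsnk, τ.symm.trans σ, fun i => ?_⟩
  have := hσ (τ.symm i)
  simpa [hμ] using this
end

section
/- Let a₀, a₁, a₃ be real numbers with a₀ ≠ 0, and let p(x) = a₀ + a₁x + a₃x³ + x⁴. Then there exists k ∈ ℝ such that the polynomial q(x) = (−a₀/16) + (−a₁/4)x + kx² + a₃x³ + x⁴ has four nonnegative real roots (counted with multiplicity) if and only if there exists a diagonal 4×4 real matrix D with all diagonal entries nonzero such that p is the characteristic polynomial of D · G(4,2) · D. -/
open Matrix Polynomial

set_option maxHeartbeats 1600000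

def G42 : Matrix (Fin 4) (Fin 4) ℝ :=
  Matrix.of fun i j => if i = j then 1 else -1

lemma charpoly_DGD (d : Fin 4 → ℝ) :
    (Matrix.diagonal d * G42 * Matrix.diagonal d).charpoly =
      X ^ 4 + C (-(d 0 ^ 2 + d 1 ^ 2 + d 2 ^ 2 + d 3 ^ 2)) * X ^ 3
        + C (4 * (d 0 ^ 2 * d 1 ^ 2 * d 2 ^ 2 + d 0 ^ 2 * d 1 ^ 2 * d 3 ^ 2
              + d 0 ^ 2 * d 2 ^ 2 * d 3 ^ 2 + d 1 ^ 2 * d 2 ^ 2 * d 3 ^ 2)) * X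
        + C (-16 * (d 0 ^ 2 * d 1 ^ 2 * d 2 ^ 2 * d 3 ^ 2)) := by
  have hcm : (Matrix.diagonal d * G42 * Matrix.diagonal d).charmatrix =
      !![X - C (d 0 * d 0), C (d 0 * d 1), C (d 0 * d 2), C (d 0 * d 3);
         C (d 1 * d 0), X - C (d 1 * d 1), C (d 1 * d 2), C (d 1 * d 3);
         C (d 2 * d 0), C (d 2 * d 1), X - C (d 2 * d 2), C (d 2 * d 3);
         C (d 3 * d 0), C (d 3 * d 1), C (d 3 * d 2), X - C (d 3 * d 3)] := by
    have hM : ∀ i j, (Matrix.diagonal d * G42 * Matrix.diagonal d) i j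
        = d i * (if i = j then 1 else -1) * d j := by
      intro i j
      simp [Matrix.diagonal_mul, Matrix.mul_diagonal, G42, mul_comm, mul_assoc]
    apply Matrix.ext
    intro i j
    fin_cases i <;> fin_cases j <;>
      · simp [charmatrix_apply, hM]
        try ring_nf
  rw [Matrix.charpoly, hcm]
  simp [Matrix.det_succ_row_zero, Fin.sum_univ_succ, Matrix.submatrix_apply]
  norm_num [map_ofNat, show (Fin.succAbove 1 2 : Fin 4) = 3 from rfl,
    show (Fin.succAbove 2 2 : Fin 4) = 3 from rfl, show (Fin.succAbove 3 2 : Fin 4) = 2 from rfl,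
    Matrix.cons_val_two, show ∀ a b c e : ℝ[X], ![a, b, c, e] 3 = e from fun _ _ _ _ => rfl, Matrix.cons_val_succ,
    Matrix.vecHead, Matrix.vecTail]
  ring

lemma coeff_eq {b₃ b₁ b₀ c₃ c₁ c₀ : ℝ}
    (h : (X : ℝ[X]) ^ 4 + C b₃ * X ^ 3 + C b₁ * X + C b₀
       = X ^ 4 + C c₃ * X ^ 3 + C c₁ * X + C c₀) :
    b₃ = c₃ ∧ b₁ = c₁ ∧ b₀ = c₀ := by
  refine ⟨?_, ?_, ?_⟩
  · have := congrArg (fun p => Polynomial.coeff p 3) h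
    simpa [coeff_add, coeff_C_mul, coeff_X_pow, coeff_X, coeff_C] using this
  · have := congrArg (fun p => Polynomial.coeff p 1) h
    simpa [coeff_add, coeff_C_mul, coeff_X_pow, coeff_X, coeff_C] using this
  · have := congrArg (fun p => Polynomial.coeff p 0) h
    simpa [coeff_add, coeff_C_mul, coeff_X_pow, coeff_X, coeff_C] using this

theorem stmt17 (a₀ a₁ a₃ : ℝ) (ha₀ : a₀ ≠ 0) :
    (∃ k : ℝ, ∃ s : Fin 4 → ℝ, (∀ i, 0 ≤ s i) ∧
      ∀ x : ℝ, -a₀ / 16 + (-a₁ / 4) * x + k * x ^ 2 + a₃ * x ^ 3 + x ^ 4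
        = ∏ i, (x - s i)) ↔
    (∃ D : Fin 4 → ℝ, (∀ i, D i ≠ 0) ∧
      (Matrix.diagonal D * G42 * Matrix.diagonal D).charpoly
        = X ^ 4 + C a₃ * X ^ 3 + C a₁ * X + C a₀) := by
  constructor
  · rintro ⟨k, s, hs, h⟩
    -- extract coefficient relations
    have h' : ∀ x : ℝ, -a₀ / 16 + (-a₁ / 4) * x + k * x ^ 2 + a₃ * x ^ 3 + x ^ 4
        = (x - s 0) * (x - s 1) * (x - s 2) * (x - s 3) := by
      intro x; rw [h x, Fin.prod_univ_four]
    have h0 := h' 0; have h1 := h' 1; have hm1 := h' (-1)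
    have h2 := h' 2; have hm2 := h' (-2)
    ring_nf at h0 h1 hm1 h2 hm2
    have ha3 : a₃ = -(s 0 + s 1 + s 2 + s 3) := by linarith
    have ha1 : a₁ = 4 * (s 0 * s 1 * s 2 + s 0 * s 1 * s 3
        + s 0 * s 2 * s 3 + s 1 * s 2 * s 3) := by linarith
    have ha0 : a₀ = -16 * (s 0 * s 1 * s 2 * s 3) := by linarith
    have hprod : s 0 * s 1 * s 2 * s 3 ≠ 0 := fun hp => ha₀ (by rw [ha0, hp]; ring)
    have hsne : ∀ i, s i ≠ 0 := by
      intro i hi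
      apply hprod
      fin_cases i <;> simp_all
    refine ⟨fun i => Real.sqrt (s i), fun i => ?_, ?_⟩
    · simpa [Real.sqrt_eq_zero (hs i)] using hsne i
    · rw [charpoly_DGD]
      have hsq : ∀ i, Real.sqrt (s i) ^ 2 = s i := fun i => Real.sq_sqrt (hs i)
      simp only [hsq]
      rw [ha3, ha1, ha0]
  · rintro ⟨d, hd, hchar⟩
    rw [charpoly_DGD] at hchar
    obtain ⟨h3, h1, h0⟩ := coeff_eq hchar
    refine ⟨d 0 ^ 2 * d 1 ^ 2 + d 0 ^ 2 * d 2 ^ 2 + d 0 ^ 2 * d 3 ^ 2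
        + d 1 ^ 2 * d 2 ^ 2 + d 1 ^ 2 * d 3 ^ 2 + d 2 ^ 2 * d 3 ^ 2,
      fun i => d i ^ 2, fun i => sq_nonneg (d i), fun x => ?_⟩
    rw [Fin.prod_univ_four, ← h3, ← h1, ← h0]
    ring
end
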